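/- arXiv:2204.10074 — 6 statements merged into one kernel-verified Lean document; each statement's English description precedes it below -/
import Mathlib

section
/- For any function f : ℕ → ℂ with f(0) = 0 and any n ∈ ℕ, the sum of f(gcd(n₁,...,n_k)) over all integer k-tuples (n₁,...,n_k) ∈ ℤ^k with n₁² + ⋯ + n_k² = n equals the sum over all d with d² ∣ n of (μ * f)(d) · r_k(n/d²), where r_k(m) is the number of integer k-tuples with squares summing to m and μ * f is the Dirichlet convolution of the Möbius function with f. -/
/-!
Every solution `v` of `∑ vᵢ² = n > 0` has positive gcd `g(v)`, so Möbius inversion writes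
`f (g v) = ∑_{d ∣ g v} (μ * f)(d)`. Exchanging the two sums, the coefficient of `(μ * f)(d)` counts
the solutions all of whose coordinates are divisible by `d`; these exist only when `d² ∣ n`, and
`v ↦ v / d` maps them bijectively onto the solutions of `∑ wᵢ² = n / d²`.
-/

open Finset

theorem natCast_dvd_gcd_natAbs_iff {ι : Type*} (s : Finset ι) (v : ι → ℤ) (d : ℕ) :
    d ∣ s.gcd (fun i => (v i).natAbs) ↔ ∀ i ∈ s, (d : ℤ) ∣ v i := by
  simp only [Finset.dvd_gcd_iff, Int.natCast_dvd]

section SumsOfSquares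

variable {ι : Type*} [Fintype ι]

theorem finite_sum_sq_eq (n : ℤ) : Finite {v : ι → ℤ // ∑ i, v i ^ 2 = n} := by
  refine Set.Finite.to_subtype <|
    (Set.Finite.pi fun _ : ι => Set.finite_Icc (-n) n).subset fun v hv i _ => ?_
  have hvi : v i ^ 2 ≤ n := (hv : ∑ i, v i ^ 2 = n) ▸
    single_le_sum (fun j _ => sq_nonneg (v j)) (mem_univ i)
  have := Int.natAbs_le_self_sq (v i)
  exact abs_le.mp (by rw [Int.abs_eq_natAbs]; omega)

theorem gcd_natAbs_ne_zero_of_sum_sq_ne_zero {v : ι → ℤ} (hv : ∑ i, v i ^ 2 ≠ 0) :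
    univ.gcd (fun i => (v i).natAbs) ≠ 0 := by
  rw [Ne, Finset.gcd_eq_zero_iff]
  intro h
  exact hv (sum_eq_zero fun i hi => by simp [Int.natAbs_eq_zero.mp (h i hi)])

theorem sq_dvd_sum_sq_of_dvd_gcd_natAbs {v : ι → ℤ} {d : ℕ}
    (h : d ∣ univ.gcd fun i => (v i).natAbs) : (d : ℤ) ^ 2 ∣ ∑ i, v i ^ 2 :=
  dvd_sum fun i hi => pow_dvd_pow_of_dvd ((natCast_dvd_gcd_natAbs_iff _ _ _).mp h i hi) 2

def sumSqScaleEquiv {d : ℤ} (hd : d ≠ 0) (m : ℤ) :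
    {v : ι → ℤ // ∑ i, v i ^ 2 = d ^ 2 * m ∧ ∀ i, d ∣ v i} ≃ {w : ι → ℤ // ∑ i, w i ^ 2 = m} where
  toFun v := ⟨fun i => v.1 i / d, by
    refine mul_left_cancel₀ (pow_ne_zero 2 hd) ?_
    rw [mul_sum]
    exact (sum_congr rfl fun i _ => by rw [← mul_pow, Int.mul_ediv_cancel' (v.2.2 i)]).trans v.2.1⟩
  invFun w := ⟨fun i => d * w.1 i, by
    simp only [mul_pow, ← mul_sum, w.2], fun i => dvd_mul_right d _⟩
  left_inv v := Subtype.ext <| funext fun i => Int.mul_ediv_cancel' (v.2.2 i)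
  right_inv w := Subtype.ext <| funext fun i => Int.mul_ediv_cancel_left _ hd

theorem card_sum_sq_eq_dvd_gcd {n d : ℕ} (hd : d ≠ 0) (hdn : d ^ 2 ∣ n) :
    Nat.card {v : {v : ι → ℤ // ∑ i, v i ^ 2 = (n : ℤ)} //
        d ∣ univ.gcd fun i => (v.1 i).natAbs}
      = Nat.card {w : ι → ℤ // ∑ i, w i ^ 2 = ((n / d ^ 2 : ℕ) : ℤ)} := by
  have hn : (n : ℤ) = (d : ℤ) ^ 2 * ((n / d ^ 2 : ℕ) : ℤ) := by
    exact_mod_cast (Nat.mul_div_cancel' hdn).symm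
  refine Nat.card_congr <| (Equiv.subtypeSubtypeEquivSubtypeInter
    (fun v : ι → ℤ => ∑ i, v i ^ 2 = (n : ℤ)) fun v => d ∣ univ.gcd fun i => (v i).natAbs).trans <|
    (Equiv.subtypeEquivRight fun v => ?_).trans (sumSqScaleEquiv (Nat.cast_ne_zero.mpr hd) _)
  simp only [natCast_dvd_gcd_natAbs_iff, mem_univ, true_implies, hn]

end SumsOfSquares

theorem sum_divisors_moebius_conv {R : Type*} [CommRing R] (f : ℕ → R) {m : ℕ} (hm : 0 < m) :
    ∑ d ∈ m.divisors, ∑ e ∈ d.divisors, (ArithmeticFunction.moebius e : R) * f (d / e) = f m :=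
  ArithmeticFunction.sum_eq_iff_sum_mul_moebius_eq.mpr
    (fun _ _ =>
      Nat.sum_divisorsAntidiagonal fun a b => ((ArithmeticFunction.moebius a : ℤ) : R) * f b)
    m hm

theorem stmt_0_general (k : ℕ) (f : ℕ → ℂ) (n : ℕ) (hn : 0 < n) :
    ∑' v : {v : Fin k → ℤ // ∑ i, (v i) ^ 2 = (n : ℤ)},
        f (Finset.univ.gcd fun i => (v.val i).natAbs)
      = ∑ d ∈ n.divisors.filter (fun d => d ^ 2 ∣ n),
          (∑ e ∈ d.divisors, (ArithmeticFunction.moebius e : ℂ) * f (d / e)) *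
            (Nat.card {w : Fin k → ℤ // ∑ i, (w i) ^ 2 = ((n / d ^ 2 : ℕ) : ℤ)} : ℂ) := by
  classical
  set S := {v : Fin k → ℤ // ∑ i, v i ^ 2 = (n : ℤ)}
  have : Finite S := finite_sum_sq_eq _
  have : Fintype S := Fintype.ofFinite S
  set g : S → ℕ := fun v => univ.gcd fun i => (v.1 i).natAbs
  set c : ℕ → ℂ := fun d => ∑ e ∈ d.divisors, (ArithmeticFunction.moebius e : ℂ) * f (d / e)
  have hg : ∀ v : S, g v ≠ 0 := fun v =>
    gcd_natAbs_ne_zero_of_sum_sq_ne_zero (v.2.trans_ne (by exact_mod_cast hn.ne'))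
  have hmem : ∀ (v : S) (d : ℕ), d ∈ (g v).divisors ↔ d ∈ n.divisors.filter (· ^ 2 ∣ n) ∧ d ∣ g v :=
    fun v d => by
      have hsq : d ∣ g v → d ^ 2 ∣ n := fun h => by
        exact_mod_cast v.2 ▸ sq_dvd_sum_sq_of_dvd_gcd_natAbs h
      simp only [Nat.mem_divisors, mem_filter]
      exact ⟨fun h => ⟨⟨⟨(dvd_pow_self d two_ne_zero).trans (hsq h.1), hn.ne'⟩, hsq h.1⟩, h.1⟩,
        fun h => ⟨h.2, hg v⟩⟩
  rw [tsum_fintype]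
  calc ∑ v : S, f (g v) = ∑ v : S, ∑ d ∈ (g v).divisors, c d :=
        sum_congr rfl fun v _ => (sum_divisors_moebius_conv f (Nat.pos_of_ne_zero (hg v))).symm
    _ = ∑ d ∈ n.divisors.filter (· ^ 2 ∣ n), ∑ v ∈ univ.filter (d ∣ g ·), c d :=
        sum_comm' fun v d => by simpa [and_comm] using hmem v d
    _ = _ := sum_congr rfl fun d hd => by
        have hd0 : d ≠ 0 := Nat.pos_of_mem_divisors (mem_filter.mp hd).1 |>.ne'
        rw [sum_const, nsmul_eq_mul, mul_comm, ← Fintype.card_subtype, ← Nat.card_eq_fintype_card,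
          card_sum_sq_eq_dvd_gcd hd0 (mem_filter.mp hd).2]

theorem stmt_0 (k : ℕ) (hk : 2 ≤ k) (f : ℕ → ℂ) (hf : f 0 = 0) (n : ℕ) (hn : 0 < n) :
    ∑' v : {v : Fin k → ℤ // ∑ i, (v i) ^ 2 = (n : ℤ)},
        f (Finset.univ.gcd fun i => (v.val i).natAbs)
      = ∑ d ∈ n.divisors.filter (fun d => d ^ 2 ∣ n),
          (∑ e ∈ d.divisors, (ArithmeticFunction.moebius e : ℂ) * f (d / e)) *
            (Nat.card {w : Fin k → ℤ // ∑ i, (w i) ^ 2 = ((n / d ^ 2 : ℕ) : ℤ)} : ℂ) :=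
  stmt_0_general k f n hn
end

section
/- Let k ≥ 1 be a fixed integer. There is a constant C (depending only on k) such that for all real x > 0 and all positive reals a₁,...,a_k, the number of positive integer k-tuples (n₁,...,n_k) with a₁n₁² + ⋯ + a_k n_k² ≤ x differs from V_k x^{k/2} / (2^k √(a₁⋯a_k)) by at most C · x^{(k-1)/2}(√a₁ + ⋯ + √a_k)/√(a₁⋯a_k), where V_k = π^{k/2}/Γ(k/2 + 1) is the volume of the k-dimensional unit ball, so that V_k/2^k is the volume of its portion in the positive orthant. -/
open scoped BigOperators
open MeasureTheory

/-- The volume of the `k`-dimensional unit ball, `V_k = π^{k/2} / Γ(k/2 + 1)`. -/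
noncomputable def Vball (k : ℕ) : ℝ := Real.pi ^ ((k : ℝ) / 2) / Real.Gamma ((k : ℝ) / 2 + 1)

lemma vol_unit_ball (k : ℕ) (hk : 1 ≤ k) :
    volume {z : Fin k → ℝ | ∑ i, z i ^ 2 ≤ 1} = ENNReal.ofReal (Vball k) := by
  have : Nonempty (Fin k) := ⟨⟨0, hk⟩⟩
  have h := MeasureTheory.volume_sum_rpow_le (ι := Fin k) (p := 2) one_le_two 1
  have hset : {x : Fin k → ℝ | (∑ i, |x i| ^ (2:ℝ)) ^ ((1:ℝ)/2) ≤ 1}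
      = {z : Fin k → ℝ | ∑ i, z i ^ 2 ≤ 1} := by
    ext z
    have hsum : ∑ i, |z i| ^ (2:ℝ) = ∑ i, z i ^ 2 := by
      refine Finset.sum_congr rfl fun i _ => ?_
      rw [show ((2:ℝ)) = ((2:ℕ):ℝ) by norm_num, Real.rpow_natCast, sq_abs]
    have hnn : (0:ℝ) ≤ ∑ i, z i ^ 2 := Finset.sum_nonneg fun i _ => sq_nonneg _
    simp only [Set.mem_setOf_eq, hsum]
    have key := Real.rpow_le_rpow_iff (x := ∑ i, z i ^ 2) (y := 1) (z := (1:ℝ)/2)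
      hnn zero_le_one (by norm_num)
    rw [Real.one_rpow] at key
    exact key
  rw [hset] at h
  rw [h, Fintype.card_fin]
  have hg : Real.Gamma (1/2 + 1) = Real.sqrt Real.pi / 2 := by
    rw [Real.Gamma_add_one (by norm_num), Real.Gamma_one_half_eq]; ring
  have h2 : (2 * Real.Gamma (1/2 + 1)) ^ k = Real.pi ^ ((k:ℝ)/2) := by
    rw [hg]
    rw [show (2:ℝ) * (Real.sqrt Real.pi / 2) = Real.sqrt Real.pi by ring]
    rw [Real.sqrt_eq_rpow, ← Real.rpow_natCast (Real.pi ^ ((1:ℝ)/2)) k,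
      ← Real.rpow_mul Real.pi_nonneg]
    ring_nf
  rw [h2, ENNReal.ofReal_one, one_pow, one_mul, Vball]

lemma hyperplane_null (k : ℕ) (i : Fin k) : volume {y : Fin k → ℝ | y i = 0} = 0 := by
  classical
  have hset : {y : Fin k → ℝ | y i = 0}
      = Set.pi Set.univ (Function.update (fun _ : Fin k => (Set.univ : Set ℝ)) i {0}) := by
    ext y
    simp only [Set.mem_setOf_eq, Set.mem_pi, Set.mem_univ, forall_true_left]
    constructor
    · intro h j
      rcases eq_or_ne j i with rfl | hj
      · simp [h]
      · simp [Function.update_of_ne hj]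
    · intro h
      have := h i
      simpa using this
  rw [hset, volume_pi_pi]
  refine Finset.prod_eq_zero (Finset.mem_univ i) ?_
  simp

lemma vol_quadrant (k : ℕ) :
    (2:ENNReal)^k * volume {z : Fin k → ℝ | (∀ i, 0 ≤ z i) ∧ ∑ i, z i ^ 2 ≤ 1}
      = volume {z : Fin k → ℝ | ∑ i, z i ^ 2 ≤ 1} := by
  classical
  set Q : Set (Fin k → ℝ) := {z | (∀ i, 0 ≤ z i) ∧ ∑ i, z i ^ 2 ≤ 1} with hQ
  have hmb : MeasurableSet {z : Fin k → ℝ | ∑ i, z i ^ 2 ≤ 1} := by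
    refine measurableSet_le ?_ measurable_const
    exact Finset.measurable_sum _ fun i _ => ((measurable_pi_apply i).pow_const 2)
  -- the family of reflected sets
  set F : (Fin k → Bool) → Set (Fin k → ℝ) := fun s =>
    {z | ∑ i, z i ^ 2 ≤ 1} ∩ {y | ∀ i, if s i then 0 ≤ y i else y i ≤ 0} with hF
  have hOmb : ∀ s : Fin k → Bool, MeasurableSet {y : Fin k → ℝ | ∀ i, if s i then 0 ≤ y i else y i ≤ 0} := by
    intro s
    have : {y : Fin k → ℝ | ∀ i, if s i then 0 ≤ y i else y i ≤ 0}
        = ⋂ i, {y | if s i then 0 ≤ y i else y i ≤ 0} := by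
      ext y
      rw [Set.mem_iInter]
      rfl
    rw [this]
    refine MeasurableSet.iInter fun i => ?_
    rcases Bool.eq_false_or_eq_true (s i) with hs | hs <;> simp only [hs]
    · simpa using measurableSet_le measurable_const (measurable_pi_apply i)
    · simpa using measurableSet_le (measurable_pi_apply i) measurable_const
  have hFmb : ∀ s, MeasurableSet (F s) := fun s => hmb.inter (hOmb s)
  -- each F s has the same volume as Q
  have hvol : ∀ s, volume (F s) = volume Q := by
    intro s
    have hmp : MeasurePreserving (fun (y : Fin k → ℝ) i => if s i then y i else -y i) := by
      refine volume_preserving_pi (f := fun i t => if s i then t else -t) (fun i => ?_)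
      cases hs : s i <;> simp only [hs, if_true, if_false, Bool.false_eq_true, ite_true, ite_false, eq_self_iff_true]
      · exact Measure.measurePreserving_neg _
      · exact MeasurePreserving.id _
    have hpre : (fun (y : Fin k → ℝ) i => if s i then y i else -y i) ⁻¹' (F s) = Q := by
      ext y
      simp only [Set.mem_preimage, hF, Set.mem_inter_iff, Set.mem_setOf_eq, hQ]
      have hsum : ∑ i, (if s i then y i else -y i) ^ 2 = ∑ i, y i ^ 2 := by
        refine Finset.sum_congr rfl fun i _ => ?_
        split_ifs <;> ring
      rw [hsum]
      constructor
      · rintro ⟨h1, h2⟩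
        refine ⟨fun i => ?_, h1⟩
        have := h2 i
        cases hs : s i <;> rw [hs] at this <;> simp at this <;> linarith
      · rintro ⟨h1, h2⟩
        refine ⟨h2, fun i => ?_⟩
        cases hs : s i <;> simp [h1 i]
    rw [← hpre, hmp.measure_preimage (hFmb s).nullMeasurableSet]
  -- the union of the F s is the whole ball
  have hunion : (⋃ s, F s) = {z : Fin k → ℝ | ∑ i, z i ^ 2 ≤ 1} := by
    ext y
    simp only [Set.mem_iUnion, hF, Set.mem_inter_iff, Set.mem_setOf_eq]
    constructor
    · rintro ⟨s, h1, _⟩; exact h1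
    · intro h
      refine ⟨fun i => decide (0 ≤ y i), h, fun i => ?_⟩
      by_cases hy : 0 ≤ y i
      · simp [hy]
      · simp [hy, le_of_not_ge hy]
  -- a.e. disjointness
  have hdisj : Pairwise (Function.onFun (MeasureTheory.AEDisjoint volume) F) := by
    intro s t hst
    obtain ⟨i, hi⟩ := Function.ne_iff.mp hst
    refine measure_mono_null (fun y hy => ?_) (hyperplane_null k i)
    obtain ⟨⟨_, hys⟩, ⟨_, hyt⟩⟩ := hy
    have h1 := hys i
    have h2 := hyt i
    simp only [Set.mem_setOf_eq]
    cases hs : s i <;> cases ht : t i <;> rw [hs] at h1 <;> rw [ht] at h2 <;>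
      simp at h1 h2 <;> first | (exact absurd rfl (hs ▸ ht ▸ hi)) | linarith
  have := MeasureTheory.measure_iUnion₀ hdisj (fun s => (hFmb s).nullMeasurableSet)
  rw [hunion] at this
  rw [this]
  simp_rw [hvol]
  rw [tsum_fintype, Finset.sum_const, Finset.card_univ]
  rw [nsmul_eq_mul]
  congr 1
  rw [Fintype.card_fun]
  simp

lemma vol_ellipsoid (k : ℕ) (hk : 1 ≤ k) (x : ℝ) (hx : 0 < x) (a : Fin k → ℝ)
    (ha : ∀ i, 0 < a i) :
    volume {y : Fin k → ℝ | (∀ i, 0 ≤ y i) ∧ ∑ i, a i * y i ^ 2 ≤ x}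
      = ENNReal.ofReal (Vball k * x ^ ((k : ℝ) / 2) / (2 ^ k * Real.sqrt (∏ i, a i))) := by
  classical
  set c : Fin k → ℝ := fun i => Real.sqrt (x / a i) with hc
  have hcpos : ∀ i, 0 < c i := fun i => Real.sqrt_pos.mpr (div_pos hx (ha i))
  have hcsq : ∀ i, c i ^ 2 = x / a i := fun i => Real.sq_sqrt (le_of_lt (div_pos hx (ha i)))
  set f : (Fin k → ℝ) →ₗ[ℝ] (Fin k → ℝ) := Matrix.toLin' (Matrix.diagonal c) with hf
  have hfapp : ∀ (z : Fin k → ℝ) (i : Fin k), f z i = c i * z i := by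
    intro z i
    rw [hf, Matrix.toLin'_apply, Matrix.mulVec_diagonal]
  have hdet : LinearMap.det f = ∏ i, c i := by
    rw [hf, LinearMap.det_toLin', Matrix.det_diagonal]
  -- the image identity
  have himg : f '' {z : Fin k → ℝ | (∀ i, 0 ≤ z i) ∧ ∑ i, z i ^ 2 ≤ 1}
      = {y : Fin k → ℝ | (∀ i, 0 ≤ y i) ∧ ∑ i, a i * y i ^ 2 ≤ x} := by
    ext y
    constructor
    · rintro ⟨z, ⟨hz1, hz2⟩, rfl⟩
      refine ⟨fun i => by rw [hfapp]; exact mul_nonneg (le_of_lt (hcpos i)) (hz1 i), ?_⟩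
      have : ∑ i, a i * f z i ^ 2 = x * ∑ i, z i ^ 2 := by
        rw [Finset.mul_sum]
        refine Finset.sum_congr rfl fun i _ => ?_
        rw [hfapp, mul_pow, hcsq i]
        have hai : a i ≠ 0 := (ha i).ne'
        field_simp
      rw [this]
      calc x * ∑ i, z i ^ 2 ≤ x * 1 := by
            exact mul_le_mul_of_nonneg_left hz2 (le_of_lt hx)
        _ = x := mul_one x
    · rintro ⟨hy1, hy2⟩
      refine ⟨fun i => y i / c i, ⟨fun i => div_nonneg (hy1 i) (le_of_lt (hcpos i)), ?_⟩,
        funext fun i => ?_⟩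
      · have : ∑ i, (y i / c i) ^ 2 = (∑ i, a i * y i ^ 2) / x := by
          rw [Finset.sum_div]
          refine Finset.sum_congr rfl fun i _ => ?_
          rw [div_pow, hcsq i]
          have hai : a i ≠ 0 := (ha i).ne'
          field_simp
        rw [this]
        exact div_le_one_of_le₀ hy2 (le_of_lt hx)
      · rw [hfapp]
        exact mul_div_cancel₀ _ (ne_of_gt (hcpos i))
  have himage := MeasureTheory.Measure.addHaar_image_linearMap (μ := volume) f
    {z : Fin k → ℝ | (∀ i, 0 ≤ z i) ∧ ∑ i, z i ^ 2 ≤ 1}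
  rw [himg] at himage
  rw [himage, hdet]
  -- compute the product of the c i
  have hprodpos : 0 < ∏ i, a i := Finset.prod_pos (fun i _ => ha i)
  have hsqprod : 0 < Real.sqrt (∏ i, a i) := Real.sqrt_pos.mpr hprodpos
  have hprodc : ∏ i, c i = x ^ ((k : ℝ) / 2) / Real.sqrt (∏ i, a i) := by
    have h1 : ∏ i, c i = (∏ i, (x / a i)) ^ ((1:ℝ)/2) := by
      rw [← Real.finset_prod_rpow _ _ (fun i _ => (div_pos hx (ha i)).le) ((1:ℝ)/2)]
      exact Finset.prod_congr rfl fun i _ => by simp only [hc, Real.sqrt_eq_rpow]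
    rw [h1, Finset.prod_div_distrib, Finset.prod_const, Finset.card_univ, Fintype.card_fin,
      Real.div_rpow (pow_nonneg hx.le k) hprodpos.le,
      ← Real.rpow_natCast x k, ← Real.rpow_mul hx.le, Real.sqrt_eq_rpow,
      show (k:ℝ) * (1/2) = (k:ℝ)/2 by ring]
  have habs : |∏ i, c i| = ∏ i, c i := abs_of_pos (Finset.prod_pos fun i _ => hcpos i)
  rw [habs, hprodc]
  -- now cancel the factor 2^k
  refine (ENNReal.mul_left_strictMono (a := (2:ENNReal)^k)
    (by positivity) (by simp [ENNReal.pow_ne_top])).injective ?_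
  rw [mul_comm _ ((2:ENNReal)^k), mul_comm _ ((2:ENNReal)^k)]
  show (2:ENNReal)^k * _ = (2:ENNReal)^k * _
  rw [← mul_assoc, mul_comm ((2:ENNReal)^k), mul_assoc, vol_quadrant k, vol_unit_ball k hk]
  rw [show ((2:ENNReal)^k) = ENNReal.ofReal ((2:ℝ)^k) by
    rw [ENNReal.ofReal_pow (by norm_num)]; norm_num]
  rw [← ENNReal.ofReal_mul (by positivity), ← ENNReal.ofReal_mul (by positivity)]
  congr 1
  have h2 : (0:ℝ) < 2 ^ k := by positivity
  field_simp

theorem stmt_5 (k : ℕ) (hk : 1 ≤ k) :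
    ∃ C : ℝ, 0 < C ∧ ∀ x : ℝ, 0 < x → ∀ a : Fin k → ℝ, (∀ i, 0 < a i) →
      |(Nat.card {v : Fin k → ℕ // (∀ i, 0 < v i) ∧ ∑ i, a i * (v i : ℝ) ^ 2 ≤ x} : ℝ)
          - Vball k * x ^ ((k : ℝ) / 2) / (2 ^ k * Real.sqrt (∏ i, a i))|
        ≤ C * x ^ (((k : ℝ) - 1) / 2) * (∑ i, Real.sqrt (a i)) / Real.sqrt (∏ i, a i) := by
  classical
  refine ⟨1, one_pos, fun x hx a ha => ?_⟩
  -- notation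
  set V : ℝ := Vball k * x ^ ((k : ℝ) / 2) / (2 ^ k * Real.sqrt (∏ i, a i)) with hV
  set S : Set (Fin k → ℕ) := {v | (∀ i, 0 < v i) ∧ ∑ i, a i * (v i : ℝ) ^ 2 ≤ x} with hS
  -- basic positivity facts
  have hprodpos : 0 < ∏ i, a i := Finset.prod_pos (fun i _ => ha i)
  have hsqprod : 0 < Real.sqrt (∏ i, a i) := Real.sqrt_pos.mpr hprodpos
  have hVnn : 0 ≤ V := by
    rw [hV]
    have h1 : 0 < Real.Gamma ((k:ℝ)/2 + 1) := Real.Gamma_pos_of_pos (by positivity)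
    have h2 : 0 ≤ Vball k := le_of_lt (div_pos (Real.rpow_pos_of_pos Real.pi_pos _) h1)
    positivity
  -- finiteness of S
  have hfin : S.Finite := by
    refine Set.Finite.subset (Set.Finite.pi (fun i => Set.finite_Iic (⌈Real.sqrt (x / a i)⌉₊))) ?_
    rintro v ⟨hv1, hv2⟩
    rw [Set.mem_pi]
    intro i _
    have hterm : a i * (v i : ℝ) ^ 2 ≤ x := by
      calc a i * (v i : ℝ) ^ 2 ≤ ∑ j, a j * (v j : ℝ) ^ 2 :=
            Finset.single_le_sum (f := fun j => a j * (v j : ℝ) ^ 2)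
              (fun j _ => mul_nonneg (ha j).le (by positivity)) (Finset.mem_univ i)
        _ ≤ x := hv2
    have hvle : (v i : ℝ) ≤ Real.sqrt (x / a i) := by
      rw [Real.le_sqrt (Nat.cast_nonneg _) (div_pos hx (ha i)).le]
      rw [le_div_iff₀ (ha i)]
      linarith [hterm]
    have : (v i : ℝ) ≤ (⌈Real.sqrt (x / a i)⌉₊ : ℝ) :=
      le_trans hvle (Nat.le_ceil _)
    exact Set.mem_Iic.mpr (Nat.cast_le.mp this)
  set T : Finset (Fin k → ℕ) := hfin.toFinset with hT
  have hcard : (Nat.card {v : Fin k → ℕ // (∀ i, 0 < v i) ∧ ∑ i, a i * (v i : ℝ) ^ 2 ≤ x} : ℝ)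
      = (T.card : ℝ) := by
    congr 1
    rw [show {v : Fin k → ℕ // (∀ i, 0 < v i) ∧ ∑ i, a i * (v i : ℝ) ^ 2 ≤ x} = ↥S from rfl]
    rw [Nat.card_coe_set_eq, Set.ncard_eq_toFinset_card S hfin]
  set N : ℕ := T.card with hN
  -- the cubes
  set cube : (Fin k → ℕ) → Set (Fin k → ℝ) :=
    fun v => Set.pi Set.univ (fun i => Set.Ico ((v i : ℝ) - 1) (v i)) with hcube
  have hcubemb : ∀ v, MeasurableSet (cube v) :=
    fun v => MeasurableSet.univ_pi (fun i => measurableSet_Ico)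
  have hcubevol : ∀ v, volume (cube v) = 1 := by
    intro v
    rw [hcube, volume_pi_pi]
    simp [Real.volume_Ico]
  -- the union of cubes
  set U : Set (Fin k → ℝ) := ⋃ v ∈ T, cube v with hU
  have hdisj : (T : Set (Fin k → ℕ)).PairwiseDisjoint cube := by
    intro v _ w _ hvw
    rw [Function.onFun, Set.disjoint_left]
    intro y hy1 hy2
    obtain ⟨i, hi⟩ := Function.ne_iff.mp hvw
    have h1 := hy1 i (Set.mem_univ i)
    have h2 := hy2 i (Set.mem_univ i)
    simp only [Set.mem_Ico] at h1 h2
    rcases lt_or_gt_of_ne hi with h | h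
    · have : (v i : ℝ) + 1 ≤ (w i : ℝ) := by exact_mod_cast Nat.succ_le_of_lt h
      linarith [h1.2, h2.1]
    · have : (w i : ℝ) + 1 ≤ (v i : ℝ) := by exact_mod_cast Nat.succ_le_of_lt h
      linarith [h1.1, h2.2]
  have hUvol : volume U = (N : ENNReal) := by
    rw [hU, measure_biUnion_finset hdisj (fun v _ => hcubemb v)]
    simp [hcubevol, hN]
  -- U is contained in the ellipsoid region E
  set E : Set (Fin k → ℝ) := {y | (∀ i, 0 ≤ y i) ∧ ∑ i, a i * y i ^ 2 ≤ x} with hE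
  have hUE : U ⊆ E := by
    rintro y hy
    rw [hU] at hy
    simp only [Set.mem_iUnion] at hy
    obtain ⟨v, hvT, hyv⟩ := hy
    have hvS : v ∈ S := by rwa [hT, Set.Finite.mem_toFinset] at hvT
    obtain ⟨hv1, hv2⟩ := hvS
    have hyi : ∀ i, (v i : ℝ) - 1 ≤ y i ∧ y i < v i := by
      intro i
      have := hyv i (Set.mem_univ i)
      simpa using this
    have hynn : ∀ i, 0 ≤ y i := by
      intro i
      have h1 : (1:ℝ) ≤ (v i : ℝ) := by exact_mod_cast hv1 i
      linarith [(hyi i).1]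
    refine ⟨hynn, le_trans ?_ hv2⟩
    refine Finset.sum_le_sum fun i _ => ?_
    have := (hyi i).2
    have h2 : y i ^ 2 ≤ (v i : ℝ) ^ 2 := by nlinarith [hynn i]
    nlinarith [le_of_lt (ha i)]
  -- the shrunk region is contained in U
  set E₂ : Set (Fin k → ℝ) := {y | (∀ i, 0 ≤ y i) ∧ ∑ i, a i * (y i + 1) ^ 2 ≤ x} with hE2
  have hE2U : E₂ ⊆ U := by
    rintro y ⟨hy1, hy2⟩
    set v : Fin k → ℕ := fun i => ⌊y i⌋₊ + 1 with hv
    have hvS : v ∈ S := by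
      refine ⟨fun i => Nat.succ_pos _, ?_⟩
      refine le_trans (Finset.sum_le_sum fun i _ => ?_) hy2
      have hfl : ((v i : ℝ)) ≤ y i + 1 := by
        rw [hv]
        push_cast
        have := Nat.floor_le (hy1 i)
        linarith
      have hvnn : (0:ℝ) ≤ (v i : ℝ) := Nat.cast_nonneg _
      have : (v i : ℝ) ^ 2 ≤ (y i + 1) ^ 2 := by nlinarith
      nlinarith [le_of_lt (ha i)]
    rw [hU]
    simp only [Set.mem_iUnion]
    refine ⟨v, by rwa [hT, Set.Finite.mem_toFinset], ?_⟩
    intro i _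
    simp only [Set.mem_Ico]
    constructor
    · rw [hv]
      push_cast
      have := Nat.floor_le (hy1 i)
      linarith
    · rw [hv]
      push_cast
      exact Nat.lt_floor_add_one (y i)
  -- translation: E₂ has the same volume as E₃
  set E₃ : Set (Fin k → ℝ) := {y | (∀ i, (1:ℝ) ≤ y i) ∧ ∑ i, a i * y i ^ 2 ≤ x} with hE3
  have htrans : volume E₂ = volume E₃ := by
    have : E₂ = (fun y : Fin k → ℝ => (fun _ => (1:ℝ)) + y) ⁻¹' E₃ := by
      ext y
      simp only [Set.mem_preimage, hE2, hE3, Set.mem_setOf_eq, Pi.add_apply]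
      constructor
      · rintro ⟨h1, h2⟩
        exact ⟨fun i => by linarith [h1 i], by
          refine le_trans (le_of_eq ?_) h2
          exact Finset.sum_congr rfl fun i _ => by ring_nf⟩
      · rintro ⟨h1, h2⟩
        exact ⟨fun i => by linarith [h1 i], by
          refine le_trans (le_of_eq ?_) h2
          exact Finset.sum_congr rfl fun i _ => by ring_nf⟩
    rw [this, measure_preimage_add]
  -- boxes covering E \ E₃
  set box : Fin k → Set (Fin k → ℝ) := fun i =>
    Set.pi Set.univ (fun j => if j = i then Set.Ico (0:ℝ) 1
      else Set.Icc 0 (Real.sqrt (x / a j))) with hbox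
  have hcover : E ⊆ E₃ ∪ ⋃ i, box i := by
    rintro y ⟨hy1, hy2⟩
    by_cases hall : ∀ i, (1:ℝ) ≤ y i
    · exact Or.inl ⟨hall, hy2⟩
    · push_neg at hall
      obtain ⟨i, hi⟩ := hall
      refine Or.inr (Set.mem_iUnion.mpr ⟨i, ?_⟩)
      intro j _
      have hterm : a j * y j ^ 2 ≤ x := by
        calc a j * y j ^ 2 ≤ ∑ l, a l * y l ^ 2 :=
              Finset.single_le_sum (f := fun l => a l * y l ^ 2)
                (fun l _ => mul_nonneg (ha l).le (by positivity)) (Finset.mem_univ j)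
          _ ≤ x := hy2
      have hyle : y j ≤ Real.sqrt (x / a j) := by
        rw [Real.le_sqrt (hy1 j) (div_pos hx (ha j)).le, le_div_iff₀ (ha j)]
        linarith
      by_cases hji : j = i
      · subst hji
        simp only [if_pos rfl, Set.mem_Ico]
        exact ⟨hy1 j, hi⟩
      · simp only [if_neg hji, Set.mem_Icc]
        exact ⟨hy1 j, hyle⟩
  have hboxvol : ∀ i, volume (box i)
      = ENNReal.ofReal (∏ j ∈ Finset.univ.erase i, Real.sqrt (x / a j)) := by
    intro i
    rw [hbox, volume_pi_pi]
    have heach : ∀ j, volume (if j = i then Set.Ico (0:ℝ) 1 else Set.Icc 0 (Real.sqrt (x / a j)))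
        = ENNReal.ofReal (if j = i then 1 else Real.sqrt (x / a j)) := by
      intro j
      by_cases hji : j = i
      · simp [hji]
      · simp [hji, Real.volume_Icc]
    simp_rw [heach]
    rw [← ENNReal.ofReal_prod_of_nonneg (fun j _ => by positivity)]
    congr 1
    rw [← Finset.mul_prod_erase Finset.univ _ (Finset.mem_univ i), if_pos rfl, one_mul]
    exact Finset.prod_congr rfl fun j hj => by rw [if_neg (Finset.mem_erase.mp hj).1]
  -- the error terms
  have herr : ∀ i, ∏ j ∈ Finset.univ.erase i, Real.sqrt (x / a j)
      = x ^ (((k:ℝ) - 1) / 2) * Real.sqrt (a i) / Real.sqrt (∏ j, a j) := by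
    intro i
    have hne : Real.sqrt (x / a i) ≠ 0 := (Real.sqrt_pos.mpr (div_pos hx (ha i))).ne'
    have hall : ∏ j, Real.sqrt (x / a j) = x ^ ((k:ℝ)/2) / Real.sqrt (∏ j, a j) := by
      have h1 : ∏ j, Real.sqrt (x / a j) = (∏ j, (x / a j)) ^ ((1:ℝ)/2) := by
        rw [← Real.finset_prod_rpow _ _ (fun j _ => (div_pos hx (ha j)).le) ((1:ℝ)/2)]
        exact Finset.prod_congr rfl fun j _ => by rw [Real.sqrt_eq_rpow]
      rw [h1, Finset.prod_div_distrib, Finset.prod_const, Finset.card_univ, Fintype.card_fin,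
        Real.div_rpow (pow_nonneg hx.le k) hprodpos.le,
        ← Real.rpow_natCast x k, ← Real.rpow_mul hx.le, Real.sqrt_eq_rpow,
        show (k:ℝ) * (1/2) = (k:ℝ)/2 by ring]
    refine mul_right_cancel₀ hne ?_
    rw [Finset.prod_erase_mul Finset.univ _ (Finset.mem_univ i), hall]
    rw [Real.sqrt_div hx.le]
    have hsa : Real.sqrt (a i) ≠ 0 := (Real.sqrt_pos.mpr (ha i)).ne'
    have hsx : Real.sqrt x = x ^ ((1:ℝ)/2) := Real.sqrt_eq_rpow x
    have hxp : x ^ (((k:ℝ)-1)/2) * x ^ ((1:ℝ)/2) = x ^ ((k:ℝ)/2) := by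
      rw [← Real.rpow_add hx]
      congr 1
      ring
    field_simp
    rw [hsx, ← hxp]
  -- assembling the inequalities
  have hEvol := vol_ellipsoid k hk x hx a ha
  have hEvol' : volume E = ENNReal.ofReal V := hEvol
  have hupper : (N:ℝ) ≤ V := by
    have h1 : ENNReal.ofReal (N:ℝ) ≤ ENNReal.ofReal V := by
      rw [ENNReal.ofReal_natCast]
      calc (N:ENNReal) = volume U := hUvol.symm
        _ ≤ volume E := measure_mono hUE
        _ = ENNReal.ofReal V := hEvol'
    exact (ENNReal.ofReal_le_ofReal_iff hVnn).mp h1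
  set Err : ℝ := x ^ (((k:ℝ)-1)/2) * (∑ i, Real.sqrt (a i)) / Real.sqrt (∏ i, a i) with hErr
  have hErrnn : 0 ≤ Err := by
    rw [hErr]
    have h0 : 0 ≤ ∑ i, Real.sqrt (a i) :=
      Finset.sum_nonneg fun i _ => Real.sqrt_nonneg _
    exact div_nonneg (mul_nonneg (Real.rpow_nonneg hx.le _) h0) hsqprod.le
  have hsum_err : ∑ i, (x ^ (((k:ℝ)-1)/2) * Real.sqrt (a i) / Real.sqrt (∏ j, a j)) = Err := by
    rw [hErr, Finset.mul_sum, Finset.sum_div]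
  have hlower : V ≤ (N:ℝ) + Err := by
    have h1 : ENNReal.ofReal V ≤ ENNReal.ofReal ((N:ℝ) + Err) := by
      rw [ENNReal.ofReal_add (Nat.cast_nonneg _) hErrnn, ENNReal.ofReal_natCast]
      calc ENNReal.ofReal V = volume E := hEvol'.symm
        _ ≤ volume (E₃ ∪ ⋃ i, box i) := measure_mono hcover
        _ ≤ volume E₃ + volume (⋃ i, box i) := measure_union_le _ _
        _ ≤ volume E₃ + ∑ i, volume (box i) :=
            add_le_add_right (measure_iUnion_fintype_le _ _) _
        _ = volume E₂ + ∑ i, volume (box i) := by rw [htrans]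
        _ ≤ volume U + ∑ i, volume (box i) := add_le_add_left (measure_mono hE2U) _
        _ = (N:ENNReal) + ∑ i, volume (box i) := by rw [hUvol]
        _ = (N:ENNReal) + ENNReal.ofReal Err := by
            congr 1
            simp_rw [hboxvol, herr]
            rw [← ENNReal.ofReal_sum_of_nonneg (fun i _ => div_nonneg (mul_nonneg
              (Real.rpow_nonneg hx.le _) (Real.sqrt_nonneg _)) hsqprod.le), hsum_err]
    exact (ENNReal.ofReal_le_ofReal_iff (add_nonneg (Nat.cast_nonneg _) hErrnn)).mp h1
  rw [hcard]
  rw [show (1:ℝ) * x ^ (((k:ℝ) - 1) / 2) * (∑ i, Real.sqrt (a i)) / Real.sqrt (∏ i, a i)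
      = Err by rw [hErr, one_mul]]
  rw [abs_le]
  constructor
  · linarith
  · linarith
end

section
/- Let k ≥ 1 be a fixed integer. There is a constant C (depending only on k) such that for all real x > 0 and all positive reals a₁,...,a_k, the sum of n₁·n₂⋯n_k over positive integer k-tuples (n₁,...,n_k) with a₁n₁² + ⋯ + a_k n_k² ≤ x differs from x^k / (2^k · k! · a₁⋯a_k) by at most C · x^{k-1/2}(√a₁ + ⋯ + √a_k)/(a₁⋯a_k). -/
/-!
Induct on `k`, splitting off the first coordinate:
`S_{k+1}(x, a) = ∑_{1 ≤ n ≤ √(x/a₀)} n · S_k(x - a₀n², a')`.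
Replacing each `S_k` by its main term costs at most `(x/a₀) · C x^(k-1/2) ∑ √a'ᵢ / ∏ a'ᵢ`,
because `∑_{n ≤ √(x/a₀)} n ≤ x/a₀`. What remains is a Riemann sum of `t (x - a₀t²)^k`, whose
integral over `[0, √(x/a₀)]` is the main term `x^(k+1) / (2a₀(k+1))`; on that interval the
function is `(2k+1)x^k`-Lipschitz and bounded by `x^k √(x/a₀)`, so sum and integral differ by
`O(x^k √(x/a₀))`.
-/

open Finset

lemma abs_sub_integral_le_of_abs_sub_le {f : ℝ → ℝ} {c L : ℝ} (hf : Continuous f)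
    (hL : ∀ t ∈ Set.Icc c (c + 1), |f (c + 1) - f t| ≤ L) :
    |f (c + 1) - ∫ t in c..c + 1, f t| ≤ L := by
  have hconst : f (c + 1) = ∫ _ in c..c + 1, f (c + 1) := by simp
  rw [hconst, ← intervalIntegral.integral_sub intervalIntegrable_const (hf.intervalIntegrable _ _)]
  have hbound : ∀ t ∈ Set.uIoc c (c + 1), ‖f (c + 1) - f t‖ ≤ L := fun t ht => by
    rw [Set.uIoc_of_le (by linarith)] at ht
    exact hL t (Set.Ioc_subset_Icc_self ht)
  simpa using intervalIntegral.norm_integral_le_of_norm_le_const hbound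

lemma abs_sum_Icc_floor_sub_integral_le {f : ℝ → ℝ} {T L M : ℝ} (hf : Continuous f)
    (hT : 0 ≤ T) (hL₀ : 0 ≤ L)
    (hL : ∀ s ∈ Set.Icc 0 T, ∀ t ∈ Set.Icc 0 T, |f s - f t| ≤ L * |s - t|)
    (hM : ∀ t ∈ Set.Icc 0 T, |f t| ≤ M) :
    |∑ n ∈ Icc 1 ⌊T⌋₊, f n - ∫ t in 0..T, f t| ≤ L * T + M := by
  set N := ⌊T⌋₊
  have hNT : (N : ℝ) ≤ T := Nat.floor_le hT
  have hTN : T - N ≤ 1 := by linarith [Nat.lt_floor_add_one T]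
  have hsum : ∑ n ∈ Icc 1 N, f n = ∑ i ∈ range N, f (i + 1) := by
    rw [← Ico_add_one_right_eq_Icc, sum_Ico_eq_sum_range]
    simp [add_comm]
  have hint : ∫ t in 0..T, f t
      = (∑ i ∈ range N, ∫ t in (i : ℝ)..i + 1, f t) + ∫ t in N..T, f t := by
    have := intervalIntegral.sum_integral_adjacent_intervals (a := fun i : ℕ => (i : ℝ)) (n := N)
      (μ := MeasureTheory.volume) fun _ _ => hf.intervalIntegrable _ _
    push_cast at this
    rw [this, intervalIntegral.integral_add_adjacent_intervals
      (hf.intervalIntegrable _ _) (hf.intervalIntegrable _ _)]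
  have hunit : ∀ i ∈ range N, |f (i + 1) - ∫ t in (i : ℝ)..i + 1, f t| ≤ L := by
    intro i hi
    have hiN : (i : ℝ) + 1 ≤ N := by exact_mod_cast mem_range.mp hi
    refine abs_sub_integral_le_of_abs_sub_le hf fun t ht => ?_
    refine (hL _ ⟨by positivity, by linarith⟩ t ⟨by linarith [ht.1, i.cast_nonneg (α := ℝ)],
      by linarith [ht.2]⟩).trans (mul_le_of_le_one_right hL₀ ?_)
    rw [abs_le]; constructor <;> linarith [ht.1, ht.2]
  have htail : |∫ t in N..T, f t| ≤ M := by
    have hM₀ : 0 ≤ M := (abs_nonneg _).trans (hM T ⟨hT, le_rfl⟩)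
    have hbound : ∀ t ∈ Set.uIoc (N : ℝ) T, ‖f t‖ ≤ M := fun t ht => by
      rw [Set.uIoc_of_le hNT] at ht
      exact hM t ⟨N.cast_nonneg.trans ht.1.le, ht.2⟩
    have := intervalIntegral.norm_integral_le_of_norm_le_const hbound
    rw [Real.norm_eq_abs, abs_of_nonneg (sub_nonneg.mpr hNT)] at this
    exact this.trans (mul_le_of_le_one_right hM₀ hTN)
  calc |∑ n ∈ Icc 1 N, f n - ∫ t in 0..T, f t|
      = |∑ i ∈ range N, (f (i + 1) - ∫ t in (i : ℝ)..i + 1, f t) - ∫ t in N..T, f t| := by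
        rw [hsum, hint, sum_sub_distrib, sub_add_eq_sub_sub]
    _ ≤ ∑ i ∈ range N, |f (i + 1) - ∫ t in (i : ℝ)..i + 1, f t| + |∫ t in N..T, f t| := by
        grw [abs_sub, abs_sum_le_sum_abs]
    _ ≤ N * L + M := by
        grw [sum_le_card_nsmul _ _ _ hunit, htail]; simp
    _ ≤ L * T + M := by nlinarith

lemma mul_sq_le_of_le_sqrt_div {x a t : ℝ} (hx : 0 ≤ x) (ha : 0 < a) (ht : 0 ≤ t)
    (htx : t ≤ √(x / a)) : a * t ^ 2 ≤ x :=
  (le_div_iff₀' ha).mp ((Real.le_sqrt ht (by positivity)).mp htx)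

lemma abs_mul_sub_sq_pow_sub_le (m : ℕ) {x a s t : ℝ} (ha : 0 ≤ a) (hs : 0 ≤ s) (ht : 0 ≤ t)
    (hsx : a * s ^ 2 ≤ x) (htx : a * t ^ 2 ≤ x) :
    |s * (x - a * s ^ 2) ^ m - t * (x - a * t ^ 2) ^ m| ≤ (2 * m + 1) * x ^ m * |s - t| := by
  set u := x - a * s ^ 2
  set v := x - a * t ^ 2
  have hx : 0 ≤ x := (by positivity : 0 ≤ a * s ^ 2).trans hsx
  have hu : |u| ≤ x := abs_le.mpr ⟨by nlinarith, by nlinarith⟩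
  have hv : |v| ≤ x := abs_le.mpr ⟨by nlinarith, by nlinarith⟩
  have huv : |u - v| = a * (s + t) * |s - t| := by
    rw [show u - v = a * (s + t) * (t - s) by ring, abs_mul, abs_sub_comm,
      abs_of_nonneg (by positivity)]
  have hpow : |u ^ m - v ^ m| ≤ |u - v| * m * x ^ (m - 1) := by
    grw [abs_pow_sub_pow_le, max_le hu hv]
  have hts : t * (a * (s + t)) ≤ 2 * x := by nlinarith [sq_nonneg (s - t)]
  have hxm : (m : ℝ) * x ^ (m - 1) * x = m * x ^ m := by
    rcases m with _ | m
    · simp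
    · simp only [Nat.add_sub_cancel, pow_succ]; ring
  calc |s * u ^ m - t * v ^ m| = |(s - t) * u ^ m + t * (u ^ m - v ^ m)| := by ring_nf
    _ ≤ |s - t| * x ^ m + t * (|u - v| * m * x ^ (m - 1)) := by
        grw [abs_add_le, abs_mul, abs_mul, abs_of_nonneg ht, abs_pow, hu, hpow]
    _ = |s - t| * x ^ m + m * x ^ (m - 1) * (t * (a * (s + t))) * |s - t| := by rw [huv]; ring
    _ ≤ |s - t| * x ^ m + m * x ^ (m - 1) * (2 * x) * |s - t| := by gcongr
    _ = (2 * m + 1) * x ^ m * |s - t| := by linear_combination 2 * |s - t| * hxm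

lemma integral_mul_sub_sq_pow (m : ℕ) {x a : ℝ} (hx : 0 ≤ x) (ha : 0 < a) :
    ∫ t in (0 : ℝ)..√(x / a), t * (x - a * t ^ 2) ^ m = x ^ (m + 1) / (2 * a * (m + 1)) := by
  have hderiv : ∀ t, HasDerivAt (fun t => -((x - a * t ^ 2) ^ (m + 1) / (2 * a * (m + 1))))
      (t * (x - a * t ^ 2) ^ m) t := fun t => by
    refine ((((hasDerivAt_pow 2 t).const_mul a).const_sub x).pow (m + 1)).div_const
      (2 * a * (m + 1)) |>.neg.congr_deriv ?_
    field_simp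
    push_cast
    ring
  rw [intervalIntegral.integral_eq_sub_of_hasDerivAt (fun t _ => hderiv t)
    ((by fun_prop : Continuous fun t : ℝ => t * (x - a * t ^ 2) ^ m).intervalIntegrable _ _),
    Real.sq_sqrt (by positivity), mul_div_cancel₀ _ ha.ne']
  simp

lemma abs_sum_mul_sub_sq_pow_sub_le (m : ℕ) {x a : ℝ} (hx : 0 ≤ x) (ha : 0 < a) :
    |∑ n ∈ Icc 1 ⌊√(x / a)⌋₊, (n : ℝ) * (x - a * n ^ 2) ^ m - x ^ (m + 1) / (2 * a * (m + 1))|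
      ≤ (2 * m + 2) * x ^ m * √(x / a) := by
  set T := √(x / a)
  have hT : 0 ≤ T := Real.sqrt_nonneg _
  have hdom : ∀ t ∈ Set.Icc 0 T, a * t ^ 2 ≤ x := fun t ht =>
    mul_sq_le_of_le_sqrt_div hx ha ht.1 ht.2
  rw [← integral_mul_sub_sq_pow m hx ha]
  convert abs_sum_Icc_floor_sub_integral_le (by fun_prop) hT (by positivity)
    (fun s hs t ht => abs_mul_sub_sq_pow_sub_le m ha.le hs.1 ht.1 (hdom s hs) (hdom t ht))
    (M := T * x ^ m) (fun t ht => ?_) using 1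
  · ring
  · have h0 : 0 ≤ x - a * t ^ 2 := sub_nonneg.mpr (hdom t ht)
    rw [abs_of_nonneg (by have := ht.1; positivity)]
    gcongr
    · exact ht.2
    · nlinarith [sq_nonneg t]

lemma sum_Icc_floor_sqrt_le {y : ℝ} (hy : 0 ≤ y) : ∑ n ∈ Icc 1 ⌊√y⌋₊, (n : ℝ) ≤ y := by
  have hN : (⌊√y⌋₊ : ℝ) ≤ √y := Nat.floor_le (Real.sqrt_nonneg y)
  calc ∑ n ∈ Icc 1 ⌊√y⌋₊, (n : ℝ) ≤ ∑ _n ∈ Icc 1 ⌊√y⌋₊, √y :=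
        sum_le_sum fun n hn => (Nat.cast_le.mpr (mem_Icc.mp hn).2).trans hN
    _ = ⌊√y⌋₊ * √y := by simp
    _ ≤ √y * √y := by gcongr
    _ = y := Real.mul_self_sqrt hy

def ellipsoidPoints (k : ℕ) (x : ℝ) (a : Fin k → ℝ) : Set (Fin k → ℕ) :=
  {v | (∀ i, 0 < v i) ∧ ∑ i, a i * (v i : ℝ) ^ 2 ≤ x}

noncomputable def latticeProductSum (k : ℕ) (x : ℝ) (a : Fin k → ℝ) : ℝ :=
  ∑' v : ellipsoidPoints k x a, ∏ i, (v.1 i : ℝ)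

/-- The integral of `t₁ ⋯ t_k` over `{t ∈ [0, ∞)ᵏ | ∑ aᵢ tᵢ² ≤ x}`. -/
noncomputable def ellipsoidMoment (k : ℕ) (x : ℝ) (a : Fin k → ℝ) : ℝ :=
  x ^ k / (2 ^ k * k.factorial * ∏ i, a i)

section ellipsoidPoints

variable {k : ℕ} {x : ℝ} {a : Fin k → ℝ}

lemma coe_le_sqrt_of_mem_ellipsoidPoints (ha : ∀ i, 0 < a i) {v : Fin k → ℕ}
    (hv : v ∈ ellipsoidPoints k x a) (i : Fin k) : (v i : ℝ) ≤ √(x / a i) := by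
  refine Real.le_sqrt_of_sq_le ((le_div_iff₀' (ha i)).mpr (le_trans ?_ hv.2))
  exact single_le_sum (f := fun j => a j * (v j : ℝ) ^ 2)
    (fun j _ => mul_nonneg (ha j).le (by positivity)) (mem_univ i)

lemma ellipsoidPoints_finite (x : ℝ) (ha : ∀ i, 0 < a i) : (ellipsoidPoints k x a).Finite :=
  (Set.Finite.pi fun i => Set.finite_Iic ⌊√(x / a i)⌋₊).subset fun _ hv i _ =>
    Nat.le_floor (coe_le_sqrt_of_mem_ellipsoidPoints ha hv i)

lemma latticeProductSum_eq_sum (ha : ∀ i, 0 < a i) :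
    latticeProductSum k x a = ∑ v ∈ (ellipsoidPoints_finite x ha).toFinset, ∏ i, (v i : ℝ) := by
  rw [← Finset.tsum_subtype']
  exact tsum_congr_set_coe (fun v : Fin k → ℕ => ∏ i, (v i : ℝ)) (Set.Finite.coe_toFinset _).symm

end ellipsoidPoints

lemma cons_mem_ellipsoidPoints_iff {k : ℕ} {x : ℝ} {a : Fin (k + 1) → ℝ} {n : ℕ} {w : Fin k → ℕ} :
    (Fin.cons n w : Fin (k + 1) → ℕ) ∈ ellipsoidPoints (k + 1) x a ↔
      0 < n ∧ w ∈ ellipsoidPoints k (x - a 0 * n ^ 2) (Fin.tail a) := by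
  simp only [ellipsoidPoints, Set.mem_ofPred_eq, Fin.forall_fin_succ, Fin.sum_univ_succ,
    Fin.cons_zero, Fin.cons_succ, Fin.tail, le_sub_iff_add_le', and_assoc]

lemma latticeProductSum_zero {x : ℝ} (hx : 0 ≤ x) (a : Fin 0 → ℝ) :
    latticeProductSum 0 x a = 1 := by
  have : ellipsoidPoints 0 x a = Set.univ := by simp [ellipsoidPoints, hx]
  simp [latticeProductSum, this]

lemma latticeProductSum_succ {k : ℕ} (x : ℝ) {a : Fin (k + 1) → ℝ} (ha : ∀ i, 0 < a i) :
    latticeProductSum (k + 1) x a = ∑ n ∈ Icc 1 ⌊√(x / a 0)⌋₊,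
      (n : ℝ) * latticeProductSum k (x - a 0 * n ^ 2) (Fin.tail a) := by
  have ha' : ∀ i, 0 < Fin.tail a i := fun i => ha i.succ
  simp_rw [latticeProductSum_eq_sum ha, latticeProductSum_eq_sum ha', mul_sum]
  rw [sum_sigma']
  refine sum_nbij' (fun v => ⟨v 0, Fin.tail v⟩) (fun p => Fin.cons p.1 p.2) ?_ ?_ ?_ ?_ ?_
  · intro v hv
    rw [Set.Finite.mem_toFinset] at hv
    have hv' := hv
    rw [← Fin.cons_self_tail v, cons_mem_ellipsoidPoints_iff] at hv'
    simp only [mem_sigma, mem_Icc, Set.Finite.mem_toFinset]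
    exact ⟨⟨hv'.1, Nat.le_floor (coe_le_sqrt_of_mem_ellipsoidPoints ha hv 0)⟩, hv'.2⟩
  · rintro ⟨n, w⟩ hp
    simp only [mem_sigma, mem_Icc, Set.Finite.mem_toFinset] at hp ⊢
    exact cons_mem_ellipsoidPoints_iff.mpr ⟨hp.1.1, hp.2⟩
  · intro v _
    exact Fin.cons_self_tail v
  · rintro ⟨n, w⟩ _
    simp
  · intro v _
    exact Fin.prod_univ_succ fun i => (v i : ℝ)

/-- For `k = 0` the exponent is negative, but then the sum is empty. -/
lemma rpow_sub_half_mul_sum_sqrt_le {k : ℕ} {x y : ℝ} (hy : 0 ≤ y) (hyx : y ≤ x) (b : Fin k → ℝ) :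
    y ^ ((k : ℝ) - 1 / 2) * ∑ i, √(b i) ≤ x ^ ((k : ℝ) - 1 / 2) * ∑ i, √(b i) := by
  rcases k with _ | k
  · simp
  · gcongr
    push_cast
    linarith

lemma sum_mul_ellipsoidMoment_sub_ellipsoidMoment_succ {k : ℕ} (x : ℝ) (a : Fin (k + 1) → ℝ)
    (N : ℕ) :
    ∑ n ∈ Icc 1 N, (n : ℝ) * ellipsoidMoment k (x - a 0 * n ^ 2) (Fin.tail a)
        - ellipsoidMoment (k + 1) x a
      = (∑ n ∈ Icc 1 N, (n : ℝ) * (x - a 0 * n ^ 2) ^ k - x ^ (k + 1) / (2 * a 0 * (k + 1)))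
        / (2 ^ k * k.factorial * ∏ i, Fin.tail a i) := by
  simp only [ellipsoidMoment, Fin.prod_univ_succ a, Fin.tail, Nat.factorial_succ, sub_div, sum_div,
    mul_div_assoc, div_div]
  congr 1
  push_cast
  ring_nf

def IsLatticeErrorConstant (k : ℕ) (C : ℝ) : Prop :=
  ∀ x : ℝ, 0 ≤ x → ∀ a : Fin k → ℝ, (∀ i, 0 < a i) →
    |latticeProductSum k x a - ellipsoidMoment k x a|
      ≤ C * x ^ ((k : ℝ) - 1 / 2) * (∑ i, √(a i)) / ∏ i, a i

lemma abs_sum_mul_latticeProductSum_sub_le {k : ℕ} {C : ℝ} (hC : 0 ≤ C)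
    (hk : IsLatticeErrorConstant k C) {x : ℝ} (hx : 0 ≤ x) {a : Fin (k + 1) → ℝ}
    (ha : ∀ i, 0 < a i) :
    |∑ n ∈ Icc 1 ⌊√(x / a 0)⌋₊, (n : ℝ) * (latticeProductSum k (x - a 0 * n ^ 2) (Fin.tail a)
        - ellipsoidMoment k (x - a 0 * n ^ 2) (Fin.tail a))|
      ≤ x / a 0 * (C * x ^ ((k : ℝ) - 1 / 2) * (∑ i, √(Fin.tail a i)) / ∏ i, Fin.tail a i) := by
  have hP : 0 < ∏ i, Fin.tail a i := prod_pos fun i _ => ha i.succ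
  set E := C * x ^ ((k : ℝ) - 1 / 2) * (∑ i, √(Fin.tail a i)) / ∏ i, Fin.tail a i
  grw [abs_sum_le_sum_abs]
  calc _ ≤ ∑ n ∈ Icc 1 ⌊√(x / a 0)⌋₊, (n : ℝ) * E := by
        refine sum_le_sum fun n hn => ?_
        have hy : 0 ≤ x - a 0 * n ^ 2 := sub_nonneg.mpr <| mul_sq_le_of_le_sqrt_div hx (ha 0)
          n.cast_nonneg ((Nat.le_floor_iff (Real.sqrt_nonneg _)).mp (mem_Icc.mp hn).2)
        rw [abs_mul, Nat.abs_cast]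
        gcongr
        refine (hk _ hy _ fun i => ha i.succ).trans ?_
        simp only [E, mul_assoc]
        gcongr C * ?_ / _
        exact rpow_sub_half_mul_sum_sqrt_le hy (sub_le_self x (by have := (ha 0).le; positivity)) _
    _ ≤ x / a 0 * E := by
        rw [← sum_mul]
        gcongr
        exact sum_Icc_floor_sqrt_le (div_nonneg hx (ha 0).le)

lemma abs_sum_mul_ellipsoidMoment_sub_le {k : ℕ} {x : ℝ} (hx : 0 ≤ x) {a : Fin (k + 1) → ℝ}
    (ha : ∀ i, 0 < a i) :
    |∑ n ∈ Icc 1 ⌊√(x / a 0)⌋₊, (n : ℝ) * ellipsoidMoment k (x - a 0 * n ^ 2) (Fin.tail a)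
        - ellipsoidMoment (k + 1) x a|
      ≤ (2 * k + 2) * x ^ k * √(x / a 0) / ∏ i, Fin.tail a i := by
  have hP : 0 < ∏ i, Fin.tail a i := prod_pos fun i _ => ha i.succ
  have hD : 0 < 2 ^ k * (k.factorial : ℝ) * ∏ i, Fin.tail a i := mul_pos (by positivity) hP
  rw [sum_mul_ellipsoidMoment_sub_ellipsoidMoment_succ, abs_div, abs_of_pos hD]
  calc _ ≤ (2 * k + 2) * x ^ k * √(x / a 0) / (2 ^ k * k.factorial * ∏ i, Fin.tail a i) :=
        div_le_div_of_nonneg_right (abs_sum_mul_sub_sq_pow_sub_le k hx (ha 0)) hD.le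
    _ ≤ (2 * k + 2) * x ^ k * √(x / a 0) / ∏ i, Fin.tail a i := by
        gcongr
        refine le_mul_of_one_le_left hP.le (one_le_mul_of_one_le_of_one_le ?_ ?_)
        · exact one_le_pow₀ one_le_two
        · exact_mod_cast k.factorial_pos

lemma mul_rpow_sub_half_add_mul_sqrt_div_le {k : ℕ} {x a₀ B C P : ℝ} (hx : 0 ≤ x) (ha₀ : 0 < a₀)
    (hB : 0 ≤ B) (hC : 0 ≤ C) (hP : 0 < P) :
    x / a₀ * (C * x ^ ((k : ℝ) - 1 / 2) * B / P) + (2 * k + 2) * x ^ k * √(x / a₀) / P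
      ≤ (C + 2 * k + 2) * x ^ (((k + 1 : ℕ) : ℝ) - 1 / 2) * (√a₀ + B) / (a₀ * P) := by
  have hk₀ : (0 : ℝ) ≤ k := k.cast_nonneg
  have hr₁ : x * x ^ ((k : ℝ) - 1 / 2) = x ^ (((k + 1 : ℕ) : ℝ) - 1 / 2) := by
    rw [Nat.cast_succ, add_sub_right_comm, Real.rpow_add' hx (by linarith), Real.rpow_one,
      mul_comm]
  have hr₂ : x ^ k * √x = x ^ (((k + 1 : ℕ) : ℝ) - 1 / 2) := by
    rw [Nat.cast_succ, add_sub_assoc, Real.rpow_add' hx (by linarith), Real.rpow_natCast,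
      Real.sqrt_eq_rpow]
    norm_num
  set r := x ^ (((k + 1 : ℕ) : ℝ) - 1 / 2)
  have hr₀ : 0 ≤ r := Real.rpow_nonneg hx _
  have hs : √a₀ ^ 2 = a₀ := Real.sq_sqrt ha₀.le
  have hlattice : x / a₀ * (C * x ^ ((k : ℝ) - 1 / 2) * B / P) = C * B * r / (a₀ * P) := by
    rw [← hr₁]
    field_simp
  have hmoment : (2 * k + 2) * x ^ k * √(x / a₀) / P = (2 * k + 2) * √a₀ * r / (a₀ * P) := by
    rw [Real.sqrt_div hx, ← hr₂]
    field_simp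
    rw [hs]
  rw [hlattice, hmoment, ← add_div]
  refine div_le_div_of_nonneg_right ?_ (mul_pos ha₀ hP).le
  nlinarith [mul_nonneg hr₀ (mul_nonneg hC (Real.sqrt_nonneg a₀)),
    mul_nonneg hr₀ (mul_nonneg (by positivity : (0 : ℝ) ≤ 2 * k + 2) hB)]

lemma IsLatticeErrorConstant.succ {k : ℕ} {C : ℝ} (hC : 0 ≤ C) (hk : IsLatticeErrorConstant k C) :
    IsLatticeErrorConstant (k + 1) (C + 2 * k + 2) := by
  intro x hx a ha
  have hsplit : latticeProductSum (k + 1) x a - ellipsoidMoment (k + 1) x a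
      = ∑ n ∈ Icc 1 ⌊√(x / a 0)⌋₊, (n : ℝ) * (latticeProductSum k (x - a 0 * n ^ 2) (Fin.tail a)
          - ellipsoidMoment k (x - a 0 * n ^ 2) (Fin.tail a))
        + (∑ n ∈ Icc 1 ⌊√(x / a 0)⌋₊, (n : ℝ) * ellipsoidMoment k (x - a 0 * n ^ 2) (Fin.tail a)
          - ellipsoidMoment (k + 1) x a) := by
    rw [latticeProductSum_succ x ha]
    simp only [mul_sub, sum_sub_distrib]
    ring
  rw [hsplit, Fin.sum_univ_succ, Fin.prod_univ_succ]
  exact (abs_add_le _ _).trans <| (add_le_add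
    (abs_sum_mul_latticeProductSum_sub_le hC hk hx ha)
    (abs_sum_mul_ellipsoidMoment_sub_le hx ha)).trans <|
    mul_rpow_sub_half_add_mul_sqrt_div_le hx (ha 0) (sum_nonneg fun i _ => Real.sqrt_nonneg _) hC
      (prod_pos fun i _ => ha i.succ)

theorem exists_isLatticeErrorConstant (k : ℕ) : ∃ C : ℝ, 0 < C ∧ IsLatticeErrorConstant k C := by
  induction k with
  | zero =>
    exact ⟨1, one_pos, fun x hx a _ => by simp [latticeProductSum_zero hx, ellipsoidMoment]⟩
  | succ k ih =>
    obtain ⟨C, hC, hk⟩ := ih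
    exact ⟨C + 2 * k + 2, by positivity, hk.succ hC.le⟩

theorem stmt_6_general (k : ℕ) :
    ∃ C : ℝ, 0 < C ∧ ∀ x : ℝ, 0 < x → ∀ a : Fin k → ℝ, (∀ i, 0 < a i) →
      |(∑' v : {v : Fin k → ℕ // (∀ i, 0 < v i) ∧ ∑ i, a i * (v i : ℝ) ^ 2 ≤ x},
            ∏ i, (v.val i : ℝ))
          - x ^ k / (2 ^ k * (k.factorial : ℝ) * ∏ i, a i)|
        ≤ C * x ^ ((k : ℝ) - 1 / 2) * (∑ i, Real.sqrt (a i)) / ∏ i, a i := by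
  obtain ⟨C, hC, h⟩ := exists_isLatticeErrorConstant k
  exact ⟨C, hC, fun x hx a ha => h x hx.le a ha⟩

theorem stmt_6 (k : ℕ) (hk : 1 ≤ k) :
    ∃ C : ℝ, 0 < C ∧ ∀ x : ℝ, 0 < x → ∀ a : Fin k → ℝ, (∀ i, 0 < a i) →
      |(∑' v : {v : Fin k → ℕ // (∀ i, 0 < v i) ∧ ∑ i, a i * (v i : ℝ) ^ 2 ≤ x},
            ∏ i, (v.val i : ℝ))
          - x ^ k / (2 ^ k * (k.factorial : ℝ) * ∏ i, a i)|
        ≤ C * x ^ ((k : ℝ) - 1 / 2) * (∑ i, Real.sqrt (a i)) / ∏ i, a i :=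
  stmt_6_general k
end

section
/- For k ≥ 2 and complex z₁,...,z_k with Re z_j > 1 for each j, Σ_{n₁,...,n_k ≥ 1} τ(gcd(n₁,...,n_k)) / (n₁^{z₁} ⋯ n_k^{z_k}) = ζ(z₁)⋯ζ(z_k)·ζ(z₁ + ⋯ + z_k), where τ is the number-of-divisors function. -/
/-!
Since `τ(gcd n) = #{d : d ∣ nᵢ for all i}`, the series is a sum over pairs `(d, n)` with `d`
dividing every `nᵢ`, i.e. over `n = d • m` with `d` and `m` unrestricted. As
`∏ (d mᵢ)^(-zᵢ) = d^(-∑ zᵢ) ∏ mᵢ^(-zᵢ)`, the reindexed series is the product of the Dirichlet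
series of `ζ(∑ zᵢ)` and of the `ζ(zᵢ)`; absolute convergence justifies every rearrangement.
-/

open Complex

universe u

theorem summable_norm_and_hasSum_pi_prod {ι : Type u} {β R : Type*} [Fintype ι]
    [NormedCommRing R] [CompleteSpace R] (f : ι → β → R) (hf : ∀ i, Summable fun b => ‖f i b‖) :
    (Summable fun m : ι → β => ‖∏ i, f i (m i)‖) ∧
      HasSum (fun m : ι → β => ∏ i, f i (m i)) (∏ i, ∑' b, f i b) := by
  have : Finite ι := inferInstance
  revert f
  revert ‹Fintype ι›
  apply Finite.induction_empty_option (P := fun (α : Type u) => ∀ [Fintype α] (f : α → β → R),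
    (∀ i, Summable fun b => ‖f i b‖) → (Summable fun m : α → β => ‖∏ i, f i (m i)‖) ∧
      HasSum (fun m : α → β => ∏ i, f i (m i)) (∏ i, ∑' b, f i b))
  · intro α γ e ih _ f hf
    have := Fintype.ofEquiv γ e.symm
    obtain ⟨hs, hh⟩ := ih (fun a => f (e a)) (fun a => hf (e a))
    let E : (γ → β) ≃ (α → β) := e.symm.arrowCongr (Equiv.refl β)
    have hprod : ∀ m : γ → β, ∏ a, f (e a) (E m a) = ∏ i, f i (m i) := fun m =>
      Fintype.prod_equiv e _ _ (fun i => by simp [E])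
    have h1 : Summable ((fun m : α → β => ‖∏ a, f (e a) (m a)‖) ∘ E) := E.summable_iff.mpr hs
    have h2 : HasSum ((fun m : α → β => ∏ a, f (e a) (m a)) ∘ E) (∏ a, ∑' b, f (e a) b) :=
      E.hasSum_iff.mpr hh
    rw [← Fintype.prod_equiv e (fun a => ∑' b, f (e a) b) _ fun _ => rfl]
    exact ⟨h1.congr fun m => by simp only [Function.comp_apply, hprod],
      h2.congr_fun fun m => (hprod m).symm⟩
  · intro _ f _
    simp only [Finset.univ_eq_empty, Finset.prod_empty]
    exact ⟨(hasSum_unique _).summable, hasSum_unique _⟩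
  · intro α _ ih inst f hf
    obtain rfl : inst = instFintypeOption := Subsingleton.elim _ _
    obtain ⟨hs, hh⟩ := ih (fun a => f (some a)) (fun a => hf (some a))
    let E : (Option α → β) ≃ β × (α → β) := Equiv.piOptionEquivProd
    have hprod : ∀ m : Option α → β,
        f none (E m).1 * ∏ a, f (some a) ((E m).2 a) = ∏ i, f i (m i) :=
      fun m => (Fintype.prod_option fun i => f i (m i)).symm
    have hnorm := (hf none).mul_norm hs
    have h1 : Summable ((fun p : β × (α → β) => ‖f none p.1 * ∏ a, f (some a) (p.2 a)‖) ∘ E) :=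
      E.summable_iff.mpr hnorm
    have hmul := (hf none).of_norm.hasSum.mul hh hnorm.of_norm
    have h2 : HasSum ((fun p : β × (α → β) => f none p.1 * ∏ a, f (some a) (p.2 a)) ∘ E)
        ((∑' b, f none b) * ∏ a, ∑' b, f (some a) b) :=
      E.hasSum_iff.mpr hmul
    rw [Fintype.prod_option fun i => ∑' b, f i b]
    exact ⟨h1.congr fun m => by simp only [Function.comp_apply, hprod],
      h2.congr_fun fun m => (hprod m).symm⟩

lemma Complex.cpow_sum {ι : Type*} (s : Finset ι) {x : ℂ} (hx : x ≠ 0) (f : ι → ℂ) :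
    x ^ (∑ i ∈ s, f i) = ∏ i ∈ s, x ^ f i := by
  simp only [cpow_def_of_ne_zero hx, Finset.mul_sum, Complex.exp_sum]

lemma hasSum_pnat_cpow_neg {s : ℂ} (hs : 1 < s.re) :
    HasSum (fun n : ℕ+ => ((n : ℕ) : ℂ) ^ (-s)) (riemannZeta s) := by
  have hs0 : -s ≠ 0 := neg_ne_zero.mpr <| by rintro rfl; norm_num at hs
  rw [hasSum_pnat_iff (f := fun n : ℕ => (n : ℂ) ^ (-s)), Nat.cast_zero, zero_cpow hs0, add_zero,
    zeta_eq_tsum_one_div_nat_cpow hs]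
  simpa [cpow_neg] using (summable_one_div_nat_cpow.mpr hs).hasSum

lemma summable_norm_pnat_cpow_neg {s : ℂ} (hs : 1 < s.re) :
    Summable fun n : ℕ+ => ‖((n : ℕ) : ℂ) ^ (-s)‖ := by
  simp only [norm_natCast_cpow_of_pos (PNat.pos _), neg_re]
  exact (Real.summable_nat_rpow.mpr (neg_lt_neg hs)).comp_injective PNat.coe_injective

lemma hasSum_ite_dvd {M : Type*} [AddCommMonoid M] [TopologicalSpace M] {g : ℕ} (hg : g ≠ 0)
    (c : M) : HasSum (fun d : ℕ+ => if (d : ℕ) ∣ g then c else 0) (g.divisors.card • c) := by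
  have hsum := hasSum_sum_of_ne_finset_zero (f := fun j : ℕ => if j ∣ g then c else 0)
    (s := g.divisors) (L := .unconditional ℕ) fun j hj =>
      if_neg fun hdvd => hj (Nat.mem_divisors.mpr ⟨hdvd, hg⟩)
  rw [Finset.sum_congr rfl fun j hj => if_pos (Nat.dvd_of_mem_divisors hj), Finset.sum_const]
    at hsum
  refine (PNat.coe_injective.hasSum_iff (f := fun j : ℕ => if j ∣ g then c else 0)
    fun j hj => if_neg fun hdvd => hj ?_).mpr hsum
  exact ⟨⟨j, Nat.pos_of_dvd_of_pos hdvd (Nat.pos_of_ne_zero hg)⟩, rfl⟩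

section

variable {ι : Type*} [Fintype ι]

lemma one_lt_re_sum [Nonempty ι] {z : ι → ℂ} (hz : ∀ i, 1 < (z i).re) : 1 < (∑ i, z i).re := by
  obtain ⟨i₀⟩ := ‹Nonempty ι›
  rw [re_sum]
  exact (hz i₀).trans_le <| Finset.single_le_sum (fun i _ => (zero_lt_one.trans (hz i)).le)
    (Finset.mem_univ i₀)

lemma hasSum_prod_pnat_cpow_neg {z : ι → ℂ} (hz : ∀ i, 1 < (z i).re) :
    (Summable fun m : ι → ℕ+ => ‖∏ i, ((m i : ℕ) : ℂ) ^ (-z i)‖) ∧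
      HasSum (fun m : ι → ℕ+ => ∏ i, ((m i : ℕ) : ℂ) ^ (-z i)) (∏ i, riemannZeta (z i)) := by
  obtain ⟨hnorm, hsum⟩ := summable_norm_and_hasSum_pi_prod
    (fun i (n : ℕ+) => ((n : ℕ) : ℂ) ^ (-z i)) fun i => summable_norm_pnat_cpow_neg (hz i)
  refine ⟨hnorm, ?_⟩
  rwa [Finset.prod_congr rfl fun i _ => (hasSum_pnat_cpow_neg (hz i)).tsum_eq] at hsum

lemma prod_pnat_mul_cpow_neg (z : ι → ℂ) (d : ℕ+) (m : ι → ℕ+) :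
    ∏ i, (((d * m i : ℕ+) : ℕ) : ℂ) ^ (-z i) =
      ((d : ℕ) : ℂ) ^ (-∑ i, z i) * ∏ i, ((m i : ℕ) : ℂ) ^ (-z i) := by
  simp only [PNat.mul_coe, Nat.cast_mul, natCast_mul_natCast_cpow, Finset.prod_mul_distrib,
    ← Finset.sum_neg_distrib, cpow_sum _ (Nat.cast_ne_zero.mpr d.ne_zero)]

lemma hasSum_prod_pnat_mul_cpow_neg [Nonempty ι] {z : ι → ℂ} (hz : ∀ i, 1 < (z i).re) :
    HasSum (fun p : ℕ+ × (ι → ℕ+) => ∏ i, (((p.1 * p.2 i : ℕ+) : ℕ) : ℂ) ^ (-z i))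
      ((∏ i, riemannZeta (z i)) * riemannZeta (∑ i, z i)) := by
  obtain ⟨hnorm, hsum⟩ := hasSum_prod_pnat_cpow_neg hz
  have hnorm' := (summable_norm_pnat_cpow_neg (one_lt_re_sum hz)).mul_norm hnorm
  have hmul := (hasSum_pnat_cpow_neg (one_lt_re_sum hz)).mul hsum hnorm'.of_norm
  simp only [prod_pnat_mul_cpow_neg, mul_comm (∏ i, riemannZeta (z i))]
  exact hmul

lemma gcd_pnat_ne_zero [Nonempty ι] (n : ι → ℕ+) : Finset.univ.gcd (fun i => (n i : ℕ)) ≠ 0 := by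
  obtain ⟨i₀⟩ := ‹Nonempty ι›
  exact fun h => (n i₀).ne_zero (Finset.gcd_eq_zero_iff.mp h i₀ (Finset.mem_univ i₀))

lemma dvd_gcd_pnat_iff (d : ℕ+) (n : ι → ℕ+) :
    (d : ℕ) ∣ Finset.univ.gcd (fun i => (n i : ℕ)) ↔ ∃ m : ι → ℕ+, n = fun i => d * m i := by
  simp only [Finset.dvd_gcd_iff, Finset.mem_univ, true_implies, ← PNat.dvd_iff]
  constructor
  · intro h
    choose m hm using h
    exact ⟨m, funext hm⟩
  · rintro ⟨m, rfl⟩ i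
    exact dvd_mul_right d (m i)

theorem hasSum_card_divisors_gcd_mul_prod_cpow_neg [Nonempty ι] {z : ι → ℂ}
    (hz : ∀ i, 1 < (z i).re) :
    HasSum (fun n : ι → ℕ+ => ((Finset.univ.gcd fun i => (n i : ℕ)).divisors.card : ℂ) *
        ∏ i, ((n i : ℕ) : ℂ) ^ (-z i))
      ((∏ i, riemannZeta (z i)) * riemannZeta (∑ i, z i)) := by
  let c : (ι → ℕ+) → ℂ := fun n => ∏ i, ((n i : ℕ) : ℂ) ^ (-z i)
  let F : (ι → ℕ+) × ℕ+ → ℂ := fun q =>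
    if (q.2 : ℕ) ∣ Finset.univ.gcd (fun i => (q.1 i : ℕ)) then c q.1 else 0
  let φ : ℕ+ × (ι → ℕ+) → (ι → ℕ+) × ℕ+ := fun p => (fun i => p.1 * p.2 i, p.1)
  have hφ : Function.Injective φ := by
    rintro ⟨d, m⟩ ⟨d', m'⟩ h
    simp only [φ, Prod.mk.injEq] at h
    obtain ⟨hm, rfl⟩ := h
    exact Prod.ext rfl (funext fun i => mul_left_cancel (congrFun hm i))
  have hF : ∀ q ∉ Set.range φ, F q = 0 := by
    rintro ⟨n, d⟩ hq
    refine if_neg fun hdvd => hq ?_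
    obtain ⟨m, rfl⟩ := (dvd_gcd_pnat_iff d n).mp hdvd
    exact ⟨(d, m), rfl⟩
  have hFφ : ∀ p, (F ∘ φ) p = ∏ i, (((p.1 * p.2 i : ℕ+) : ℕ) : ℂ) ^ (-z i) := fun p =>
    if_pos ((dvd_gcd_pnat_iff p.1 _).mpr ⟨p.2, rfl⟩)
  have hsum : HasSum F ((∏ i, riemannZeta (z i)) * riemannZeta (∑ i, z i)) :=
    (hφ.hasSum_iff hF).mp ((hasSum_prod_pnat_mul_cpow_neg hz).congr_fun hFφ)
  refine hsum.prod_fiberwise fun n => ?_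
  simpa only [nsmul_eq_mul] using hasSum_ite_dvd (gcd_pnat_ne_zero n) (c n)

end

theorem stmt_12 (k : ℕ) (hk : 2 ≤ k) (z : Fin k → ℂ) (hz : ∀ i, 1 < (z i).re) :
    ∑' n : Fin k → ℕ+,
        (((Finset.univ.gcd fun i => ((n i : ℕ))).divisors.card : ℂ)
          / ∏ i, ((n i : ℕ) : ℂ) ^ (z i))
      = (∏ i, riemannZeta (z i)) * riemannZeta (∑ i, z i) := by
  have : Nonempty (Fin k) := ⟨⟨0, by omega⟩⟩
  rw [← (hasSum_card_divisors_gcd_mul_prod_cpow_neg hz).tsum_eq]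
  refine tsum_congr fun n => ?_
  simp only [div_eq_mul_inv, ← Finset.prod_inv_distrib, cpow_neg]
end

section
/- For complex z₁, z₂ with Re z₁ > 2, Re z₂ > 2, Re(z₁ + z₂) > 3: Σ_{n₁,n₂ ≥ 1} lcm(n₁,n₂)/(n₁^{z₁} n₂^{z₂}) = ζ(z₁−1)·ζ(z₂−1)·ζ(z₁+z₂−1)/ζ(z₁+z₂−2). -/
/-!
Every pair of positive integers is uniquely `d • (a, b)` with `d = gcd` and `a, b` coprime, and
then `lcm = d a b`. Hence both `m ^ (1 - z₁) n ^ (1 - z₂)` and `lcm(m, n) m ^ (-z₁) n ^ (-z₂)` are a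
power of `d` times the same coprime-pair term `a ^ (1 - z₁) b ^ (1 - z₂)`. Writing `C` for the sum
of that term over coprime pairs, `ζ(z₁ - 1) ζ(z₂ - 1) = ζ(z₁ + z₂ - 2) C` while the left-hand side
is `ζ(z₁ + z₂ - 1) C`; eliminating `C` replaces the Möbius inversion.
-/

open Complex

theorem natCast_div_natCast_cpow {n : ℕ} (hn : n ≠ 0) (z : ℂ) :
    (n : ℂ) / (n : ℂ) ^ z = (n : ℂ) ^ (-(z - 1)) := by
  rw [neg_sub, cpow_sub _ _ (Nat.cast_ne_zero.2 hn), cpow_one]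

theorem lcm_div_cpow_mul_cpow {m n : ℕ} (hm : m ≠ 0) (hn : n ≠ 0) (z₁ z₂ : ℂ) :
    (Nat.lcm m n : ℂ) / ((m : ℂ) ^ z₁ * (n : ℂ) ^ z₂)
      = (m : ℂ) ^ (-(z₁ - 1)) * (n : ℂ) ^ (-(z₂ - 1)) / Nat.gcd m n := by
  have hgcd : (Nat.gcd m n : ℂ) ≠ 0 := Nat.cast_ne_zero.2 (Nat.gcd_ne_zero_left hm)
  have hprod : (Nat.gcd m n : ℂ) * Nat.lcm m n = m * n := by exact_mod_cast Nat.gcd_mul_lcm m n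
  rw [← natCast_div_natCast_cpow hm, ← natCast_div_natCast_cpow hn, eq_div_iff hgcd,
    div_mul_div_comm, ← hprod]
  ring

theorem PNat.summable_norm_natCast_cpow_neg {s : ℂ} (hs : 1 < s.re) :
    Summable fun n : ℕ+ => ‖(n : ℂ) ^ (-s)‖ := by
  have hreal : Summable fun n : ℕ+ => ((n : ℕ) : ℝ) ^ (-s.re) :=
    (Real.summable_nat_rpow.2 (neg_lt_neg hs)).comp_injective PNat.coe_injective
  simpa only [norm_natCast_cpow_of_pos (PNat.pos _), neg_re] using hreal

theorem PNat.tsum_natCast_cpow_neg {s : ℂ} (hs : 1 < s.re) :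
    ∑' n : ℕ+, (n : ℂ) ^ (-s) = riemannZeta s := by
  simp only [zeta_eq_tsum_one_div_nat_add_one_cpow hs, cpow_neg, one_div]
  exact_mod_cast tsum_pnat_eq_tsum_succ (f := fun n : ℕ => ((n : ℂ) ^ s)⁻¹)

abbrev CoprimePair := {p : ℕ+ × ℕ+ // Nat.Coprime p.1 p.2}

namespace CoprimePair

def mulLeft (x : ℕ+ × CoprimePair) : ℕ+ × ℕ+ := (x.1 * x.2.1.1, x.1 * x.2.1.2)

theorem gcd_mulLeft (d : ℕ+) (p : CoprimePair) :
    Nat.gcd (mulLeft (d, p)).1 (mulLeft (d, p)).2 = d := by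
  simp only [mulLeft, PNat.mul_coe, Nat.gcd_mul_left, p.2, mul_one]

theorem mulLeft_bijective : Function.Bijective mulLeft := by
  refine ⟨?_, ?_⟩
  · rintro ⟨d, p⟩ ⟨d', p'⟩ h
    have hd : d = d' :=
      PNat.coe_injective <| (gcd_mulLeft d p).symm.trans (by rw [h, gcd_mulLeft])
    subst hd
    obtain ⟨ha, hb⟩ := Prod.mk.inj h
    exact Prod.ext rfl (Subtype.ext (Prod.ext (mul_left_cancel ha) (mul_left_cancel hb)))
  · rintro ⟨m, n⟩
    obtain ⟨a, b, hab, hm, hn⟩ := Nat.exists_coprime m n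
    have hg : 0 < Nat.gcd m n := Nat.gcd_pos_of_pos_left _ m.pos
    have ha : 0 < a := Nat.pos_of_mul_pos_right (hm ▸ m.pos)
    have hb : 0 < b := Nat.pos_of_mul_pos_right (hn ▸ n.pos)
    refine ⟨((⟨_, hg⟩ : ℕ+), ⟨((⟨a, ha⟩ : ℕ+), (⟨b, hb⟩ : ℕ+)), hab⟩), ?_⟩
    exact Prod.ext (PNat.eq (hm.trans (mul_comm _ _)).symm) (PNat.eq (hn.trans (mul_comm _ _)).symm)

noncomputable def mulLeftEquiv : ℕ+ × CoprimePair ≃ ℕ+ × ℕ+ :=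
  .ofBijective mulLeft mulLeft_bijective

theorem cpow_mul_cpow_mulLeft (s t : ℂ) (d : ℕ+) (p : CoprimePair) :
    ((mulLeft (d, p)).1 : ℂ) ^ s * ((mulLeft (d, p)).2 : ℂ) ^ t
      = (d : ℂ) ^ (s + t) * ((p.1.1 : ℂ) ^ s * (p.1.2 : ℂ) ^ t) := by
  simp only [mulLeft, PNat.mul_coe, Nat.cast_mul, natCast_mul_natCast_cpow,
    cpow_add _ _ (Nat.cast_ne_zero.2 d.ne_zero)]
  ring

theorem lcm_div_cpow_mul_cpow_mulLeft (z₁ z₂ : ℂ) (d : ℕ+) (p : CoprimePair) :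
    (Nat.lcm (mulLeft (d, p)).1 (mulLeft (d, p)).2 : ℂ)
        / (((mulLeft (d, p)).1 : ℂ) ^ z₁ * ((mulLeft (d, p)).2 : ℂ) ^ z₂)
      = (d : ℂ) ^ (-(z₁ + z₂ - 1)) * ((p.1.1 : ℂ) ^ (-(z₁ - 1)) * (p.1.2 : ℂ) ^ (-(z₂ - 1))) := by
  rw [lcm_div_cpow_mul_cpow (PNat.ne_zero _) (PNat.ne_zero _), gcd_mulLeft,
    cpow_mul_cpow_mulLeft, mul_div_right_comm]
  congr 1
  rw [show -(z₁ + z₂ - 1) = -(z₁ - 1) + -(z₂ - 1) - 1 by ring,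
    cpow_sub _ _ (Nat.cast_ne_zero.2 d.ne_zero), cpow_one]

theorem tsum_eq_riemannZeta_mul_tsum {F : ℕ+ × ℕ+ → ℂ} {G : CoprimePair → ℂ} {s : ℂ}
    (hs : 1 < s.re) (hG : Summable fun p => ‖G p‖)
    (hFG : ∀ d p, F (mulLeft (d, p)) = (d : ℂ) ^ (-s) * G p) :
    ∑' n, F n = riemannZeta s * ∑' p, G p := by
  rw [← mulLeftEquiv.tsum_eq, ← PNat.tsum_natCast_cpow_neg hs,
    tsum_mul_tsum_of_summable_norm (PNat.summable_norm_natCast_cpow_neg hs) hG]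
  exact tsum_congr fun x => hFG x.1 x.2

end CoprimePair

open CoprimePair in
theorem stmt_17_general (z₁ z₂ : ℂ) (h₁ : 2 < z₁.re) (h₂ : 2 < z₂.re) :
    ∑' n : ℕ+ × ℕ+,
        ((Nat.lcm (n.1 : ℕ) (n.2 : ℕ) : ℂ) / (((n.1 : ℕ) : ℂ) ^ z₁ * ((n.2 : ℕ) : ℂ) ^ z₂))
      = riemannZeta (z₁ - 1) * riemannZeta (z₂ - 1) * riemannZeta (z₁ + z₂ - 1)
          / riemannZeta (z₁ + z₂ - 2) := by
  have hu : 1 < (z₁ - 1).re := by simp; linarith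
  have hv : 1 < (z₂ - 1).re := by simp; linarith
  have huv : 1 < (z₁ + z₂ - 2).re := by simp; linarith
  have huv' : 1 < (z₁ + z₂ - 1).re := by simp; linarith
  have hsum₁ := PNat.summable_norm_natCast_cpow_neg hu
  have hsum₂ := PNat.summable_norm_natCast_cpow_neg hv
  set C := ∑' p : CoprimePair, (p.1.1 : ℂ) ^ (-(z₁ - 1)) * (p.1.2 : ℂ) ^ (-(z₂ - 1))
  have hC : Summable fun p : CoprimePair =>
      ‖(p.1.1 : ℂ) ^ (-(z₁ - 1)) * (p.1.2 : ℂ) ^ (-(z₂ - 1))‖ :=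
    (hsum₁.mul_norm hsum₂).comp_injective Subtype.val_injective
  have hζζ : riemannZeta (z₁ - 1) * riemannZeta (z₂ - 1) = riemannZeta (z₁ + z₂ - 2) * C := by
    rw [← PNat.tsum_natCast_cpow_neg hu, ← PNat.tsum_natCast_cpow_neg hv,
      tsum_mul_tsum_of_summable_norm hsum₁ hsum₂]
    refine tsum_eq_riemannZeta_mul_tsum huv hC fun d p => ?_
    rw [cpow_mul_cpow_mulLeft, show -(z₁ - 1) + -(z₂ - 1) = -(z₁ + z₂ - 2) by ring]
  have hlcm : ∑' n : ℕ+ × ℕ+,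
        ((Nat.lcm (n.1 : ℕ) (n.2 : ℕ) : ℂ) / (((n.1 : ℕ) : ℂ) ^ z₁ * ((n.2 : ℕ) : ℂ) ^ z₂))
      = riemannZeta (z₁ + z₂ - 1) * C :=
    tsum_eq_riemannZeta_mul_tsum huv' hC (lcm_div_cpow_mul_cpow_mulLeft z₁ z₂)
  rw [hlcm, eq_div_iff (riemannZeta_ne_zero_of_one_lt_re huv), hζζ]
  ring

theorem stmt_17 (z₁ z₂ : ℂ) (h₁ : 2 < z₁.re) (h₂ : 2 < z₂.re) (h₃ : 3 < (z₁ + z₂).re) :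
    ∑' n : ℕ+ × ℕ+,
        ((Nat.lcm (n.1 : ℕ) (n.2 : ℕ) : ℂ) / (((n.1 : ℕ) : ℂ) ^ z₁ * ((n.2 : ℕ) : ℂ) ^ z₂))
      = riemannZeta (z₁ - 1) * riemannZeta (z₂ - 1) * riemannZeta (z₁ + z₂ - 1)
          / riemannZeta (z₁ + z₂ - 2) :=
  stmt_17_general z₁ z₂ h₁ h₂
end

section
/- Σ_{(n₁,n₂) ∈ ℕ², n₁² + n₂² ≤ x} lcm(n₁,n₂) = (C₂/8)·x² + O(x^{3/2} log x), where C₂ = ζ(3)/ζ(2), and the sum is over pairs of positive integers. -/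
/-!
Since `1 / g = ∑_{e f ∣ g} μ(e) / f` by Möbius inversion,
`lcm(n₁, n₂) = ∑_{e f ∣ (n₁, n₂)} μ(e) n₁ n₂ / f`. Writing `(n₁, n₂) = e f (m₁, m₂)` turns the
sum into `∑_{e, f} μ(e) e² f G(x / (e f)²)`, where `G(y) = ∑_{m₁² + m₂² ≤ y} m₁ m₂`. Summing over `m₂` with Gauss's formula and comparing with
`∑_{m₁ ≤ M} m₁ (y - m₁²) = y T - T²`, `T = M (M + 1) / 2` (Nicomachus), gives
`G(y) = y² / 8 + O(y^{3/2})`. The main terms add up to `x² / 8 · ∑ μ(e) / e² · ∑ 1 / f³`, which is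
`x² ζ(3) / (8 ζ(2))` up to tails `O(x² / √x)`, and the errors to
`x^{3/2} ∑_{e, f ≤ √x} 1 / (e f²) = O(x^{3/2} log x)`.
-/

open Finset Real ArithmeticFunction
open scoped ArithmeticFunction.Moebius

lemma sum_Icc_id_eq (n : ℕ) : ∑ j ∈ Icc 1 n, (j : ℝ) = n * (n + 1) / 2 := by
  induction n with
  | zero => simp
  | succ n ih => rw [sum_Icc_succ_top (by omega), ih]; push_cast; ring

lemma sum_Icc_pow_three_eq (n : ℕ) : ∑ j ∈ Icc 1 n, (j : ℝ) ^ 3 = (n * (n + 1) / 2) ^ 2 := by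
  induction n with
  | zero => simp
  | succ n ih => rw [sum_Icc_succ_top (by omega), ih]; push_cast; ring

lemma abs_floor_mul_floor_add_one_sub_le {t : ℝ} (ht : 0 ≤ t) :
    |⌊t⌋₊ * (⌊t⌋₊ + 1) / 2 - t ^ 2 / 2| ≤ t / 2 := by
  have h₁ := Nat.floor_le ht
  have h₂ := Nat.lt_floor_add_one t
  rw [abs_le]
  constructor <;> nlinarith

lemma le_floor_sqrt_iff {n : ℕ} {x : ℝ} (hx : 0 ≤ x) : n ≤ ⌊√x⌋₊ ↔ (n : ℝ) ^ 2 ≤ x := by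
  rw [Nat.le_floor_iff (sqrt_nonneg x), le_sqrt (Nat.cast_nonneg n) hx]

noncomputable def diskPairs (x : ℝ) : Finset (ℕ × ℕ) :=
  (Icc 1 ⌊√x⌋₊ ×ˢ Icc 1 ⌊√x⌋₊).filter fun p => (p.1 : ℝ) ^ 2 + (p.2 : ℝ) ^ 2 ≤ x

lemma mem_diskPairs {x : ℝ} {p : ℕ × ℕ} :
    p ∈ diskPairs x ↔ (0 < p.1 ∧ 0 < p.2) ∧ (p.1 : ℝ) ^ 2 + (p.2 : ℝ) ^ 2 ≤ x := by
  simp only [diskPairs, mem_filter, mem_product, mem_Icc, Nat.one_le_iff_ne_zero,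
    Nat.pos_iff_ne_zero]
  constructor
  · rintro ⟨⟨⟨h₁, -⟩, h₂, -⟩, h⟩
    exact ⟨⟨h₁, h₂⟩, h⟩
  · rintro ⟨⟨h₁, h₂⟩, h⟩
    have hx : 0 ≤ x := le_trans (by positivity) h
    refine ⟨⟨⟨h₁, (le_floor_sqrt_iff hx).2 ?_⟩, h₂, (le_floor_sqrt_iff hx).2 ?_⟩, h⟩ <;>
      nlinarith [sq_nonneg (p.1 : ℝ), sq_nonneg (p.2 : ℝ)]

noncomputable def diskMoment (y : ℝ) : ℝ := ∑ p ∈ diskPairs y, (p.1 : ℝ) * p.2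

lemma diskMoment_eq_sum_floor (y : ℝ) :
    diskMoment y = ∑ j ∈ Icc 1 ⌊√y⌋₊,
      (j : ℝ) * (⌊√(y - j ^ 2)⌋₊ * (⌊√(y - j ^ 2)⌋₊ + 1) / 2) := by
  rw [diskMoment, diskPairs, sum_filter, sum_product]
  refine sum_congr rfl fun j hj => ?_
  have hj : 1 ≤ j ∧ (j : ℝ) ^ 2 ≤ y := by
    rw [mem_Icc] at hj
    have hy : 0 ≤ y := by
      by_contra! hy
      simp [sqrt_eq_zero_of_nonpos hy.le] at hj
      omega
    exact ⟨hj.1, (le_floor_sqrt_iff hy).1 hj.2⟩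
  have hcol : (Icc 1 ⌊√y⌋₊).filter (fun k : ℕ => (j : ℝ) ^ 2 + (k : ℝ) ^ 2 ≤ y)
      = Icc 1 ⌊√(y - j ^ 2)⌋₊ := by
    ext k
    simp only [mem_filter, mem_Icc, le_floor_sqrt_iff (sub_nonneg.2 hj.2)]
    constructor
    · rintro ⟨⟨hk, -⟩, h⟩
      exact ⟨hk, by linarith⟩
    · rintro ⟨hk, h⟩
      exact ⟨⟨hk, (le_floor_sqrt_iff ((sq_nonneg _).trans hj.2)).2 (by nlinarith)⟩, by linarith⟩
  rw [← sum_filter, hcol]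
  dsimp only
  rw [← mul_sum, sum_Icc_id_eq]

lemma sum_Icc_mul_sub_sq_eq (M : ℕ) (y : ℝ) :
    ∑ j ∈ Icc 1 M, (j : ℝ) * ((y - j ^ 2) / 2) = y ^ 2 / 8 - (M * (M + 1) / 2 - y / 2) ^ 2 / 2 := by
  have h : ∀ j ∈ Icc 1 M, (j : ℝ) * ((y - j ^ 2) / 2) = y / 2 * j - 1 / 2 * j ^ 3 :=
    fun j _ => by ring
  rw [sum_congr rfl h, sum_sub_distrib, ← mul_sum, ← mul_sum, sum_Icc_id_eq,
    sum_Icc_pow_three_eq]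
  ring

lemma abs_diskMoment_sub_le {y : ℝ} (hy : 0 ≤ y) : |diskMoment y - y ^ 2 / 8| ≤ y * √y := by
  set s := √y
  have hs0 : 0 ≤ s := sqrt_nonneg y
  have hss : s ^ 2 = y := sq_sqrt hy
  set M := ⌊s⌋₊
  set T : ℝ := M * (M + 1) / 2 with hT
  have hTy : |T - y / 2| ≤ s / 2 := by
    simpa only [hss] using abs_floor_mul_floor_add_one_sub_le hs0
  have hcol : ∀ j ∈ Icc 1 M,
      |(j : ℝ) * (⌊√(y - j ^ 2)⌋₊ * (⌊√(y - j ^ 2)⌋₊ + 1) / 2) - j * ((y - j ^ 2) / 2)|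
        ≤ j * (s / 2) := by
    intro j hj
    have hjy : (j : ℝ) ^ 2 ≤ y := (le_floor_sqrt_iff hy).1 (mem_Icc.1 hj).2
    set t := √(y - j ^ 2)
    have ht : t ^ 2 = y - j ^ 2 := sq_sqrt (by linarith)
    have hts : t ≤ s := sqrt_le_sqrt (by nlinarith)
    rw [← mul_sub, abs_mul, Nat.abs_cast, ← ht]
    gcongr
    exact (abs_floor_mul_floor_add_one_sub_le (sqrt_nonneg _)).trans (by linarith)
  have herr : |diskMoment y - ∑ j ∈ Icc 1 M, (j : ℝ) * ((y - j ^ 2) / 2)| ≤ T * (s / 2) := by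
    rw [diskMoment_eq_sum_floor, ← sum_sub_distrib, hT, ← sum_Icc_id_eq, sum_mul]
    exact (abs_sum_le_sum_abs _ _).trans (sum_le_sum hcol)
  rw [sum_Icc_mul_sub_sq_eq, ← hT] at herr
  have hM : M = 0 ∨ 1 ≤ s := by
    rcases Nat.eq_zero_or_pos M with h | h
    · exact Or.inl h
    · exact Or.inr (by simpa using (Nat.le_floor_iff hs0).1 h)
  rcases hM with hM | hM
  · have hT0 : T = 0 := by simp [hT, hM]
    rw [hT0] at herr hTy
    rw [abs_le] at herr hTy ⊢
    constructor <;> nlinarith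
  · rw [abs_le] at herr hTy ⊢
    constructor <;> nlinarith

lemma sum_divisors_moebius (n : ℕ) : ∑ d ∈ n.divisors, (μ d : ℝ) = if n = 1 then 1 else 0 := by
  have h := congrArg (· n) (coe_moebius_mul_coe_zeta (R := ℝ))
  simpa only [coe_mul_zeta_apply, intCoe_apply, one_apply] using h

lemma sum_moebius_div_eq_inv {g N : ℕ} (hg : 0 < g) (hgN : g ≤ N) :
    ∑ q ∈ (Icc 1 N ×ˢ Icc 1 N).filter (fun q => q.1 * q.2 ∣ g), (μ q.1 : ℝ) / q.2 = 1 / g := by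
  have hcol : ∀ f ∈ Icc 1 N, (∑ e ∈ Icc 1 N, if e * f ∣ g then (μ e : ℝ) / f else 0)
      = if f = g then 1 / (g : ℝ) else 0 := by
    intro f hf
    by_cases hfg : f ∣ g
    · obtain ⟨m, rfl⟩ := hfg
      have hf : 0 < f := (mem_Icc.1 hf).1
      have hm : 0 < m := Nat.pos_of_mul_pos_left hg
      have hdiv : (Icc 1 N).filter (· ∣ m) = m.divisors := by
        ext e
        simp only [mem_filter, mem_Icc, Nat.mem_divisors]
        constructor
        · rintro ⟨-, he⟩
          exact ⟨he, hm.ne'⟩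
        · rintro ⟨he, -⟩
          have := Nat.le_of_dvd hm he
          exact ⟨⟨Nat.pos_of_dvd_of_pos he hm, by nlinarith⟩, he⟩
      simp_rw [mul_comm _ f, Nat.mul_dvd_mul_iff_left hf]
      rw [← sum_filter, hdiv, ← sum_div, sum_divisors_moebius]
      rcases eq_or_ne m 1 with rfl | hm1
      · simp
      · rw [if_neg hm1, if_neg fun h => hm1 (Nat.eq_of_mul_eq_mul_left hf (by omega)), zero_div]
    · rw [if_neg (by rintro rfl; exact hfg dvd_rfl)]
      exact sum_eq_zero fun e _ => if_neg fun h => hfg ((dvd_mul_left f e).trans h)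
  rw [sum_filter, sum_product_right, sum_congr rfl hcol, sum_ite_eq', if_pos (mem_Icc.2 ⟨hg, hgN⟩)]

lemma natCast_lcm_eq_sum_moebius {n₁ n₂ N : ℕ} (h₁ : 0 < n₁) (hN : n₁ ≤ N) :
    (Nat.lcm n₁ n₂ : ℝ) = ∑ q ∈ (Icc 1 N ×ˢ Icc 1 N).filter
      (fun q => q.1 * q.2 ∣ n₁ ∧ q.1 * q.2 ∣ n₂), (μ q.1 : ℝ) * n₁ * n₂ / q.2 := by
  have hg : 0 < Nat.gcd n₁ n₂ := Nat.gcd_pos_of_pos_left _ h₁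
  have hterm : ∀ q : ℕ × ℕ, (μ q.1 : ℝ) * n₁ * n₂ / q.2 = n₁ * n₂ * ((μ q.1 : ℝ) / q.2) :=
    fun q => by ring
  rw [filter_congr fun q _ => Nat.dvd_gcd_iff.symm, sum_congr rfl fun q _ => hterm q, ← mul_sum,
    sum_moebius_div_eq_inv hg ((Nat.gcd_le_left _ h₁).trans hN)]
  field_simp
  exact_mod_cast Nat.lcm_mul_gcd n₁ n₂

lemma image_dilate_diskPairs {d : ℕ} (hd : 0 < d) (x : ℝ) :
    (diskPairs (x / d ^ 2)).image (fun m => (d * m.1, d * m.2))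
      = (diskPairs x).filter (fun p => d ∣ p.1 ∧ d ∣ p.2) := by
  have hscale : ∀ m₁ m₂ : ℕ, ((d * m₁ : ℕ) : ℝ) ^ 2 + ((d * m₂ : ℕ) : ℝ) ^ 2 ≤ x ↔
      (m₁ : ℝ) ^ 2 + (m₂ : ℝ) ^ 2 ≤ x / d ^ 2 := by
    intro m₁ m₂
    rw [le_div_iff₀ (by positivity)]
    push_cast
    ring_nf
  ext ⟨p₁, p₂⟩
  simp only [mem_image, mem_filter, mem_diskPairs, Prod.ext_iff, Prod.exists]
  constructor
  · rintro ⟨m₁, m₂, ⟨⟨h₁, h₂⟩, hm⟩, rfl, rfl⟩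
    exact ⟨⟨⟨by positivity, by positivity⟩, (hscale m₁ m₂).2 hm⟩, dvd_mul_right d m₁,
      dvd_mul_right d m₂⟩
  · rintro ⟨⟨⟨h₁, h₂⟩, hp⟩, ⟨m₁, rfl⟩, ⟨m₂, rfl⟩⟩
    exact ⟨m₁, m₂, ⟨⟨Nat.pos_of_mul_pos_left h₁, Nat.pos_of_mul_pos_left h₂⟩,
      (hscale m₁ m₂).1 hp⟩, rfl, rfl⟩

lemma sum_diskPairs_lcm_eq (x : ℝ) :
    ∑ p ∈ diskPairs x, (Nat.lcm p.1 p.2 : ℝ) = ∑ q ∈ Icc 1 ⌊√x⌋₊ ×ˢ Icc 1 ⌊√x⌋₊,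
      (μ q.1 : ℝ) * q.1 ^ 2 * q.2 * diskMoment (x / (q.1 * q.2) ^ 2) := by
  set B := Icc 1 ⌊√x⌋₊ ×ˢ Icc 1 ⌊√x⌋₊
  calc ∑ p ∈ diskPairs x, (Nat.lcm p.1 p.2 : ℝ)
      = ∑ p ∈ diskPairs x, ∑ q ∈ B.filter (fun q => q.1 * q.2 ∣ p.1 ∧ q.1 * q.2 ∣ p.2),
          (μ q.1 : ℝ) * p.1 * p.2 / q.2 := by
        refine sum_congr rfl fun p hp => natCast_lcm_eq_sum_moebius (mem_diskPairs.1 hp).1.1 ?_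
        simp only [diskPairs, mem_filter, mem_product, mem_Icc] at hp
        exact hp.1.1.2
    _ = ∑ q ∈ B, ∑ p ∈ (diskPairs x).filter (fun p => q.1 * q.2 ∣ p.1 ∧ q.1 * q.2 ∣ p.2),
          (μ q.1 : ℝ) * p.1 * p.2 / q.2 :=
        sum_comm' fun p q => by simp only [mem_filter]; tauto
    _ = _ := by
        refine sum_congr rfl fun q hq => ?_
        simp only [B, mem_product, mem_Icc] at hq
        have hd : 0 < q.1 * q.2 := Nat.mul_pos hq.1.1 hq.2.1
        rw [← image_dilate_diskPairs hd, sum_image fun m _ m' _ h => by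
          simp only [Prod.ext_iff, Nat.mul_left_cancel_iff hd] at h; exact Prod.ext h.1 h.2,
          diskMoment, mul_sum, Nat.cast_mul]
        refine sum_congr rfl fun m _ => ?_
        push_cast
        field_simp

lemma sum_Icc_inv_sq_le_two (N : ℕ) : ∑ n ∈ Icc 1 N, ((n : ℝ) ^ 2)⁻¹ ≤ 2 := by
  have h := sum_Ioo_inv_sq_le (α := ℝ) 0 (N + 1)
  rwa [show Ioo 0 (N + 1) = Icc 1 N by ext; simp; omega, Nat.cast_zero, zero_add, div_one] at h

lemma sum_Icc_inv_le_one_add_log (N : ℕ) : ∑ n ∈ Icc 1 N, (n : ℝ)⁻¹ ≤ 1 + Real.log N := by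
  have h := harmonic_le_one_add_log N
  rw [harmonic_eq_sum_Icc] at h
  push_cast at h
  exact h

lemma abs_sum_moebius_diskMoment_sub_le {x : ℝ} (hx : 0 ≤ x) (N : ℕ) :
    |∑ q ∈ Icc 1 N ×ˢ Icc 1 N, (μ q.1 : ℝ) * q.1 ^ 2 * q.2 * diskMoment (x / (q.1 * q.2) ^ 2)
      - x ^ 2 / 8 * ((∑ e ∈ Icc 1 N, (μ e : ℝ) / e ^ 2) * ∑ f ∈ Icc 1 N, 1 / (f : ℝ) ^ 3)|
      ≤ 2 * (x * √x) * (1 + Real.log N) := by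
  have hpos : ∀ q ∈ Icc 1 N ×ˢ Icc 1 N, (0 : ℝ) < q.1 ∧ (0 : ℝ) < q.2 := fun q hq => by
    simp only [mem_product, mem_Icc] at hq
    exact ⟨by exact_mod_cast hq.1.1, by exact_mod_cast hq.2.1⟩
  have hmain : x ^ 2 / 8 * ((∑ e ∈ Icc 1 N, (μ e : ℝ) / e ^ 2) * ∑ f ∈ Icc 1 N, 1 / (f : ℝ) ^ 3)
      = ∑ q ∈ Icc 1 N ×ˢ Icc 1 N,
          (μ q.1 : ℝ) * q.1 ^ 2 * q.2 * ((x / (q.1 * q.2) ^ 2) ^ 2 / 8) := by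
    rw [sum_mul_sum, ← sum_product', mul_sum]
    refine sum_congr rfl fun q hq => ?_
    have := hpos q hq
    field_simp
  have hterm : ∀ q ∈ Icc 1 N ×ˢ Icc 1 N,
      |(μ q.1 : ℝ) * q.1 ^ 2 * q.2 * diskMoment (x / (q.1 * q.2) ^ 2)
        - (μ q.1 : ℝ) * q.1 ^ 2 * q.2 * ((x / (q.1 * q.2) ^ 2) ^ 2 / 8)|
        ≤ x * √x * ((q.1 : ℝ)⁻¹ * ((q.2 : ℝ) ^ 2)⁻¹) := by
    intro q hq
    obtain ⟨h₁, h₂⟩ := hpos q hq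
    have hμ : |(μ q.1 : ℝ)| ≤ 1 := by exact_mod_cast abs_moebius_le_one
    have hsqrt : √(x / (q.1 * q.2) ^ 2) = √x / (q.1 * q.2) := by
      rw [sqrt_div hx, sqrt_sq (by positivity)]
    rw [← mul_sub, abs_mul]
    calc |(μ q.1 : ℝ) * q.1 ^ 2 * q.2| * |diskMoment (x / (q.1 * q.2) ^ 2)
          - (x / (q.1 * q.2) ^ 2) ^ 2 / 8|
        ≤ (q.1 ^ 2 * q.2) * ((x / (q.1 * q.2) ^ 2) * √(x / (q.1 * q.2) ^ 2)) := by
          gcongr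
          · rw [abs_mul, abs_mul, abs_of_pos h₂, abs_of_pos (by positivity : (0 : ℝ) < q.1 ^ 2)]
            nlinarith [abs_nonneg (μ q.1 : ℝ), (by positivity : (0 : ℝ) < q.1 ^ 2 * q.2)]
          · exact abs_diskMoment_sub_le (by positivity)
      _ = x * √x * ((q.1 : ℝ)⁻¹ * ((q.2 : ℝ) ^ 2)⁻¹) := by
          rw [hsqrt]
          field_simp
  rw [hmain, ← sum_sub_distrib]
  calc _ ≤ ∑ q ∈ Icc 1 N ×ˢ Icc 1 N, x * √x * ((q.1 : ℝ)⁻¹ * ((q.2 : ℝ) ^ 2)⁻¹) :=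
        (abs_sum_le_sum_abs _ _).trans (sum_le_sum hterm)
    _ = x * √x * ((∑ e ∈ Icc 1 N, (e : ℝ)⁻¹) * ∑ f ∈ Icc 1 N, ((f : ℝ) ^ 2)⁻¹) := by
        rw [sum_mul_sum, ← sum_product', mul_sum]
    _ ≤ x * √x * ((1 + Real.log N) * 2) := by
        have h₀ : 0 ≤ Real.log N := Real.log_natCast_nonneg N
        gcongr
        · exact sum_Icc_inv_le_one_add_log N
        · exact sum_Icc_inv_sq_le_two N
    _ = 2 * (x * √x) * (1 + Real.log N) := by ring

lemma norm_tsum_sub_sum_Icc_le {E : Type*} [NormedAddCommGroup E] [CompleteSpace E]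
    {a : ℕ → E} (ha : ∀ n, ‖a n‖ ≤ ((n : ℝ) ^ 2)⁻¹) (N : ℕ) :
    ‖∑' n, a n - ∑ n ∈ Icc 1 N, a n‖ ≤ 2 / (N + 1) := by
  -- at `n = 0` the hypothesis reads `‖a 0‖ ≤ 0⁻¹ = 0`
  have ha₀ : a 0 = 0 := norm_le_zero_iff.1 (by simpa using ha 0)
  have htail : ∀ n, ∑ i ∈ range n, ‖a (i + (N + 1))‖ ≤ 2 / (N + 1) := by
    intro n
    calc ∑ i ∈ range n, ‖a (i + (N + 1))‖
        ≤ ∑ i ∈ range n, ((((N + 1 + i : ℕ)) : ℝ) ^ 2)⁻¹ :=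
          sum_le_sum fun i _ => (ha _).trans_eq (by rw [Nat.add_comm i])
      _ = ∑ k ∈ Ioo N (N + 1 + n), ((k : ℝ) ^ 2)⁻¹ := by
          rw [← Ico_add_one_left_eq_Ioo, sum_Ico_eq_sum_range, Nat.add_sub_cancel_left]
      _ ≤ 2 / (N + 1) := sum_Ioo_inv_sq_le N _
  have hsn : Summable fun n => ‖a (n + (N + 1))‖ :=
    summable_of_sum_range_le (fun _ => norm_nonneg _) htail
  have hs : Summable a := (summable_nat_add_iff (N + 1)).1 hsn.of_norm
  rw [← hs.sum_add_tsum_nat_add (N + 1), range_eq_Ico,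
    sum_eq_sum_Ico_succ_bot (by omega : 0 < N + 1), ha₀, zero_add, Nat.zero_add, Ico_add_one_right_eq_Icc, add_sub_cancel_left]
  exact (norm_tsum_le_tsum_norm hsn).trans
    (Real.tsum_le_of_sum_range_le (fun _ => norm_nonneg _) htail)

lemma norm_tsum_mul_tsum_sub_le {R : Type*} [NormedRing R] [CompleteSpace R]
    {a b : ℕ → R} (ha : ∀ n, ‖a n‖ ≤ ((n : ℝ) ^ 2)⁻¹) (hb : ∀ n, ‖b n‖ ≤ ((n : ℝ) ^ 2)⁻¹)
    (N : ℕ) :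
    ‖(∑' n, a n) * (∑' n, b n) - (∑ n ∈ Icc 1 N, a n) * ∑ n ∈ Icc 1 N, b n‖ ≤ 12 / (N + 1) := by
  set A := ∑' n, a n
  set B := ∑' n, b n
  set Aₙ := ∑ n ∈ Icc 1 N, a n
  set Bₙ := ∑ n ∈ Icc 1 N, b n
  have hA := norm_tsum_sub_sum_Icc_le ha N
  have hB := norm_tsum_sub_sum_Icc_le hb N
  have hA₀ : ‖A‖ ≤ 2 := by simpa using norm_tsum_sub_sum_Icc_le ha 0
  have hB₀ : ‖B‖ ≤ 2 := by simpa using norm_tsum_sub_sum_Icc_le hb 0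
  have hAₙ : ‖Aₙ‖ ≤ 4 := by
    have : 2 / ((N : ℝ) + 1) ≤ 2 := div_le_self zero_le_two (by simp)
    calc ‖Aₙ‖ = ‖A - (A - Aₙ)‖ := by rw [sub_sub_cancel]
      _ ≤ ‖A‖ + ‖A - Aₙ‖ := norm_sub_le _ _
      _ ≤ 4 := by linarith
  calc ‖A * B - Aₙ * Bₙ‖ = ‖(A - Aₙ) * B + Aₙ * (B - Bₙ)‖ := by noncomm_ring
    _ ≤ ‖A - Aₙ‖ * ‖B‖ + ‖Aₙ‖ * ‖B - Bₙ‖ :=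
        (norm_add_le _ _).trans (add_le_add (norm_mul_le _ _) (norm_mul_le _ _))
    _ ≤ 2 / (N + 1) * 2 + 4 * (2 / (N + 1)) := by gcongr
    _ = 12 / (N + 1) := by ring

lemma riemannZeta_three_eq_tsum : riemannZeta 3 = ∑' n : ℕ, 1 / (n : ℂ) ^ 3 := by
  exact_mod_cast zeta_nat_eq_tsum_of_gt_one (k := 3) (by norm_num)

lemma inv_riemannZeta_two_eq_tsum : (riemannZeta 2)⁻¹ = ∑' n : ℕ, (μ n : ℂ) / (n : ℂ) ^ 2 := by
  have h := LSeries_one_mul_Lseries_moebius (s := 2) (by norm_num)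
  rw [LSeries_one_eq_riemannZeta (by norm_num)] at h
  rw [inv_eq_of_mul_eq_one_right h, LSeries]
  refine tsum_congr fun n => ?_
  rcases eq_or_ne n 0 with rfl | hn
  · simp
  · rw [LSeries.term_def, if_neg hn, show (2 : ℂ) = ((2 : ℕ) : ℂ) by norm_num, Complex.cpow_natCast]

lemma norm_riemannZeta_three_div_two_sub_le (N : ℕ) :
    ‖riemannZeta 3 / riemannZeta 2
      - (((∑ e ∈ Icc 1 N, (μ e : ℝ) / e ^ 2) * ∑ f ∈ Icc 1 N, 1 / (f : ℝ) ^ 3 : ℝ) : ℂ)‖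
      ≤ 12 / (N + 1) := by
  have ha : ∀ n : ℕ, ‖(μ n : ℂ) / (n : ℂ) ^ 2‖ ≤ ((n : ℝ) ^ 2)⁻¹ := fun n => by
    have hμ : ‖(μ n : ℂ)‖ ≤ 1 := by
      rw [Complex.norm_intCast]; exact_mod_cast abs_moebius_le_one
    rw [norm_div, norm_pow, Complex.norm_natCast, div_eq_mul_inv]
    exact mul_le_of_le_one_left (by positivity) hμ
  have hb : ∀ n : ℕ, ‖1 / (n : ℂ) ^ 3‖ ≤ ((n : ℝ) ^ 2)⁻¹ := fun n => by
    rw [norm_div, norm_one, norm_pow, Complex.norm_natCast, one_div]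
    rcases Nat.eq_zero_or_pos n with rfl | hn
    · simp
    · have : (1 : ℝ) ≤ n := by exact_mod_cast hn
      exact inv_anti₀ (by positivity) (pow_le_pow_right₀ this (by norm_num))
  rw [div_eq_inv_mul, inv_riemannZeta_two_eq_tsum, riemannZeta_three_eq_tsum]
  push_cast
  exact norm_tsum_mul_tsum_sub_le ha hb N

lemma tsum_lcm_eq_sum_diskPairs (x : ℝ) :
    ∑' v : {v : ℕ × ℕ // (0 < v.1 ∧ 0 < v.2) ∧ (v.1 : ℝ) ^ 2 + (v.2 : ℝ) ^ 2 ≤ x},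
        ((Nat.lcm v.val.1 v.val.2 : ℕ) : ℂ)
      = ((∑ p ∈ diskPairs x, (Nat.lcm p.1 p.2 : ℝ) : ℝ) : ℂ) := by
  calc _ = ∑' p : diskPairs x, ((Nat.lcm p.val.1 p.val.2 : ℕ) : ℂ) :=
        (Equiv.subtypeEquivRight fun _ => mem_diskPairs.symm).tsum_eq
          fun p : diskPairs x => ((Nat.lcm p.val.1 p.val.2 : ℕ) : ℂ)
    _ = _ := (Finset.tsum_subtype (diskPairs x) fun p => ((Nat.lcm p.1 p.2 : ℕ) : ℂ)).trans
        (by push_cast; rfl)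

lemma rpow_three_div_two_eq_mul_sqrt {x : ℝ} (hx : 0 ≤ x) : x ^ ((3 : ℝ) / 2) = x * √x := by
  rw [sqrt_eq_rpow, ← rpow_one_add' hx (by norm_num)]
  norm_num

lemma log_floor_sqrt_le {x : ℝ} (hx : 1 ≤ x) : Real.log ⌊√x⌋₊ ≤ Real.log x / 2 := by
  have hN : 1 ≤ ⌊√x⌋₊ :=
    Nat.le_floor <| by rw [Nat.cast_one, le_sqrt zero_le_one (by linarith)]; linarith
  rw [← Real.log_sqrt (by linarith)]
  exact Real.log_le_log (by positivity) (Nat.floor_le (sqrt_nonneg x))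

lemma sq_div_floor_sqrt_add_one_le {x : ℝ} (hx : 0 ≤ x) : x ^ 2 / (⌊√x⌋₊ + 1) ≤ x * √x := by
  have hs : √x ≤ ⌊√x⌋₊ + 1 := (Nat.lt_floor_add_one _).le
  have hxx : √x * √x = x := mul_self_sqrt hx
  rw [div_le_iff₀ (by positivity)]
  nlinarith [mul_le_mul_of_nonneg_left hs (mul_nonneg hx (sqrt_nonneg x))]

theorem stmt_18 :
    ∃ C : ℝ, ∀ x : ℝ, 2 ≤ x →
      ‖(∑' v : {v : ℕ × ℕ // (0 < v.1 ∧ 0 < v.2) ∧ (v.1 : ℝ) ^ 2 + (v.2 : ℝ) ^ 2 ≤ x},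
            ((Nat.lcm v.val.1 v.val.2 : ℕ) : ℂ))
          - riemannZeta 3 / riemannZeta 2 / 8 * ((x : ℂ)) ^ 2‖
        ≤ C * x ^ ((3 : ℝ) / 2) * Real.log x := by
  refine ⟨8, fun x hx => ?_⟩
  have hx₀ : 0 ≤ x := by linarith
  have hlog : 1 / 2 ≤ Real.log x := by
    linarith [Real.log_le_log two_pos hx, Real.log_two_gt_d9]
  have hlogN := log_floor_sqrt_le (by linarith : 1 ≤ x)
  set N := ⌊√x⌋₊
  rw [tsum_lcm_eq_sum_diskPairs, sum_diskPairs_lcm_eq, rpow_three_div_two_eq_mul_sqrt hx₀]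
  set S := ∑ q ∈ Icc 1 N ×ˢ Icc 1 N,
    (μ q.1 : ℝ) * q.1 ^ 2 * q.2 * diskMoment (x / (q.1 * q.2) ^ 2)
  set P := (∑ e ∈ Icc 1 N, (μ e : ℝ) / e ^ 2) * ∑ f ∈ Icc 1 N, 1 / (f : ℝ) ^ 3
  calc ‖(S : ℂ) - riemannZeta 3 / riemannZeta 2 / 8 * (x : ℂ) ^ 2‖
      = ‖((S - x ^ 2 / 8 * P : ℝ) : ℂ)
          - ((x ^ 2 / 8 : ℝ) : ℂ) * (riemannZeta 3 / riemannZeta 2 - P)‖ := by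
        push_cast; ring_nf
    _ ≤ |S - x ^ 2 / 8 * P| + x ^ 2 / 8 * (12 / (N + 1)) := by
        refine (norm_sub_le _ _).trans (add_le_add (Complex.norm_real _).le ?_)
        rw [norm_mul, Complex.norm_real, Real.norm_of_nonneg (by positivity)]
        gcongr
        exact norm_riemannZeta_three_div_two_sub_le N
    _ = |S - x ^ 2 / 8 * P| + 3 / 2 * (x ^ 2 / (N + 1)) := by ring
    _ ≤ 2 * (x * √x) * (1 + Real.log N) + 3 / 2 * (x * √x) := by
        gcongr
        exacts [abs_sum_moebius_diskMoment_sub_le hx₀ N, sq_div_floor_sqrt_add_one_le hx₀]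
    _ ≤ 8 * (x * √x) * Real.log x := by
        have : 0 ≤ x * √x := by positivity
        nlinarith
end
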